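/- arXiv:1908.05624 — 9 statements merged into one kernel-verified Lean document; each statement's English description precedes it below -/
import Mathlib

section
/- Let X and Y be topological spaces and let C be a path-connected closed subset of X × Y that is locally direct product. Then there exist a subset A of X and a subset B of Y such that C = A × B. -/
/-- A subset `C` of `X × Y` is *locally direct product* if for every point `(a, b)` of
`X × Y` there are an open set `U` of `X`, an open set `V` of `Y`, a subset `I` of `U` and
a subset `J` of `V` such that `(a, b) ∈ U × V` and `C ∩ (U × V) = I × J`. -/
def LocallyDirectProduct {X Y : Type*} [TopologicalSpace X] [TopologicalSpace Y]
    (C : Set (X × Y)) : Prop :=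
  ∀ p : X × Y, ∃ (U : Set X) (V : Set Y) (I : Set X) (J : Set Y),
    IsOpen U ∧ IsOpen V ∧ I ⊆ U ∧ J ⊆ V ∧ p.1 ∈ U ∧ p.2 ∈ V ∧ C ∩ U ×ˢ V = I ×ˢ J

open Set

private lemma aux_real (T : Set (ℝ × ℝ)) (hT : IsClosed T)
    (hloc : ∀ p : ℝ × ℝ, ∃ (U V I J : Set ℝ),
      IsOpen U ∧ IsOpen V ∧ p.1 ∈ U ∧ p.2 ∈ V ∧ T ∩ U ×ˢ V = I ×ˢ J)
    (hdiag : ∀ r : ℝ, (r, r) ∈ T)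
    (hsymm : ∀ p ∈ T, ((p.2, p.1) : ℝ × ℝ) ∈ T) :
    ((0 : ℝ), (1 : ℝ)) ∈ T := by
  classical
  choose U V I J hUo hVo hU1 hV2 heq using hloc
  have hIJ : ∀ p q : ℝ × ℝ, q ∈ T → q.1 ∈ U p → q.2 ∈ V p → q.1 ∈ I p ∧ q.2 ∈ J p := by
    intro p q hq h1 h2
    have : q ∈ I p ×ˢ J p := by rw [← heq p]; exact ⟨hq, h1, h2⟩
    exact ⟨this.1, this.2⟩
  have hJI : ∀ (p : ℝ × ℝ) (a b : ℝ), a ∈ I p → b ∈ J p → (a, b) ∈ T := by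
    intro p a b ha hb
    have : (a, b) ∈ I p ×ˢ J p := ⟨ha, hb⟩
    rw [← heq p] at this; exact this.1
  set S : Set ℝ := {r | ∀ s t : ℝ, (min r (max 0 s), min r (max 0 t)) ∈ T} with hSdef
  have hmemS : ∀ r, 0 ≤ r → (∀ s t, s ∈ Icc 0 r → t ∈ Icc 0 r → (s, t) ∈ T) → r ∈ S := by
    intro r hr h s t
    exact h _ _ ⟨le_min hr (le_max_left 0 s), min_le_left _ _⟩
      ⟨le_min hr (le_max_left 0 t), min_le_left _ _⟩
  have hPofS : ∀ r ∈ S, ∀ s t, s ∈ Icc 0 r → t ∈ Icc 0 r → (s, t) ∈ T := by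
    intro r hr s t hs ht
    have := hr s t
    rwa [max_eq_right hs.1, min_eq_right hs.2, max_eq_right ht.1, min_eq_right ht.2] at this
  have hSclosed : IsClosed S := by
    have : S = ⋂ (s : ℝ), ⋂ (t : ℝ),
        (fun r : ℝ => ((min r (max 0 s), min r (max 0 t)) : ℝ × ℝ)) ⁻¹' T := by
      ext r
      simp only [hSdef, mem_setOf_eq, mem_iInter, mem_preimage]
    rw [this]
    exact isClosed_iInter fun s => isClosed_iInter fun t =>
      hT.preimage (by fun_prop)
  have h0S : (0 : ℝ) ∈ S := by
    intro s t
    rw [min_eq_left (le_max_left 0 s), min_eq_left (le_max_left 0 t)]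
    exact hdiag 0
  have key : ∀ x : ℝ, 0 ≤ x → x ∈ S →
      ∃ ε > 0, ∀ s t, s ∈ Icc 0 (x + ε) → t ∈ Icc 0 (x + ε) → (s, t) ∈ T := by
    intro x hx hxS
    have hP : ∀ s t, s ∈ Icc 0 x → t ∈ Icc 0 x → (s, t) ∈ T := hPofS x hxS
    have hdiag0 : ∀ w, w ∈ U (x, x) → w ∈ V (x, x) → w ∈ I (x, x) ∧ w ∈ J (x, x) :=
      fun w h1 h2 => hIJ (x, x) (w, w) (hdiag w) h1 h2
    have hcover : Icc (0 : ℝ) x ⊆ ⋃ u ∈ Icc (0 : ℝ) x, V (x, u) :=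
      fun u hu => mem_biUnion hu (hV2 (x, u))
    obtain ⟨F, hFsub, hFfin, hFcov⟩ := isCompact_Icc.elim_finite_subcover_image
      (fun u _ => hVo (x, u)) hcover
    set W : Set ℝ := U (x, x) ∩ V (x, x) ∩ ⋂ u ∈ F, U (x, u) with hWdef
    have hWopen : IsOpen W :=
      (((hUo (x, x)).inter (hVo (x, x))).inter (hFfin.isOpen_biInter fun u _ => hUo (x, u)))
    have hxW : x ∈ W := ⟨⟨hU1 (x, x), hV2 (x, x)⟩, mem_iInter₂.2 fun u _ => hU1 (x, u)⟩
    obtain ⟨ε, hε, hball⟩ := Metric.isOpen_iff.1 hWopen x hxW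
    have hrow : ∀ s ∈ W, ∀ u ∈ Icc (0 : ℝ) x, (s, u) ∈ T := by
      intro s hsW
      have hsI0 : s ∈ I (x, x) := (hdiag0 s hsW.1.1 hsW.1.2).1
      have hxJ0 : x ∈ J (x, x) := (hdiag0 x (hU1 (x, x)) (hV2 (x, x))).2
      have hsx : (s, x) ∈ T := hJI (x, x) s x hsI0 hxJ0
      by_contra hcon
      push_neg at hcon
      obtain ⟨u0, hu0, hu0T⟩ := hcon
      set K : Set ℝ := {u | u ∈ Icc (0 : ℝ) x ∧ (s, u) ∈ T} with hKdef
      set O : Set ℝ := ⋃ i ∈ F, ⋃ (_ : (K ∩ V (x, i)).Nonempty), V (x, i) with hOdef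
      have hOopen : IsOpen O := isOpen_biUnion fun i _ => isOpen_iUnion fun _ => hVo (x, i)
      have hOsub : O ∩ Icc (0 : ℝ) x ⊆ K := by
        rintro w ⟨hwO, hwI⟩
        simp only [hOdef, mem_iUnion] at hwO
        obtain ⟨i, hiF, ⟨u, ⟨huK, huV⟩⟩, hwV⟩ := hwO
        have hsU : s ∈ U (x, i) := mem_iInter₂.1 hsW.2 i hiF
        have hsIi : s ∈ I (x, i) := (hIJ (x, i) (s, u) huK.2 hsU huV).1
        have hwJ : w ∈ J (x, i) :=
          (hIJ (x, i) (x, w) (hP x w ⟨hx, le_refl x⟩ hwI) (hU1 (x, i)) hwV).2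
        exact ⟨hwI, hJI (x, i) s w hsIi hwJ⟩
      have hZopen : IsOpen {u : ℝ | (s, u) ∉ T} := by
        have : {u : ℝ | (s, u) ∉ T} = (fun u : ℝ => ((s, u) : ℝ × ℝ)) ⁻¹' Tᶜ := rfl
        rw [this]
        exact hT.isOpen_compl.preimage (by fun_prop)
      have hsplit : Icc (0 : ℝ) x ⊆ O ∪ {u : ℝ | (s, u) ∉ T} := by
        intro u hu
        by_cases h : (s, u) ∈ T
        · left
          have := hFcov hu
          simp only [mem_iUnion] at this
          obtain ⟨i, hiF, huV⟩ := this
          simp only [hOdef, mem_iUnion]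
          exact ⟨i, hiF, ⟨u, ⟨hu, h⟩, huV⟩, huV⟩
        · right; exact h
      have h1 : (Icc (0 : ℝ) x ∩ O).Nonempty := by
        have hxIcc : x ∈ Icc (0 : ℝ) x := ⟨hx, le_refl x⟩
        have := hFcov hxIcc
        simp only [mem_iUnion] at this
        obtain ⟨i, hiF, hxV⟩ := this
        refine ⟨x, hxIcc, ?_⟩
        simp only [hOdef, mem_iUnion]
        exact ⟨i, hiF, ⟨x, ⟨hxIcc, hsx⟩, hxV⟩, hxV⟩
      have h2 : (Icc (0 : ℝ) x ∩ {u : ℝ | (s, u) ∉ T}).Nonempty := ⟨u0, hu0, hu0T⟩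
      obtain ⟨w, hwIcc, hwO, hwN⟩ :=
        isPreconnected_Icc O {u : ℝ | (s, u) ∉ T} hOopen hZopen hsplit h1 h2
      exact hwN (hOsub ⟨hwO, hwIcc⟩).2
    refine ⟨ε / 2, by positivity, ?_⟩
    have hWmem : ∀ s, x < s → s ≤ x + ε / 2 → s ∈ W := by
      intro s h1 h2
      apply hball
      rw [Metric.mem_ball, Real.dist_eq, abs_of_nonneg (by linarith)]
      linarith
    intro s t hs ht
    rcases le_or_gt s x with hsx | hsx <;> rcases le_or_gt t x with htx | htx
    · exact hP s t ⟨hs.1, hsx⟩ ⟨ht.1, htx⟩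
    · exact hsymm (t, s) (hrow t (hWmem t htx ht.2) s ⟨hs.1, hsx⟩)
    · exact hrow s (hWmem s hsx hs.2) t ⟨ht.1, htx⟩
    · have hsW := hWmem s hsx hs.2
      have htW := hWmem t htx ht.2
      exact hJI (x, x) s t (hdiag0 s hsW.1.1 hsW.1.2).1 (hdiag0 t htW.1.1 htW.1.2).2
  have hIcc : Icc (0 : ℝ) 1 ⊆ S := by
    apply IsClosed.Icc_subset_of_forall_exists_gt (hSclosed.inter isClosed_Icc) h0S
    rintro r ⟨hrS, hr0, _⟩ y hy
    obtain ⟨ε, hε, hkey⟩ := key r hr0 hrS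
    refine ⟨min y (r + ε), ?_, lt_min hy (by linarith), min_le_left _ _⟩
    apply hmemS _ (le_min (le_of_lt (lt_of_le_of_lt hr0 hy)) (by linarith))
    intro s t hs ht
    exact hkey s t ⟨hs.1, hs.2.trans (min_le_right _ _)⟩ ⟨ht.1, ht.2.trans (min_le_right _ _)⟩
  have h1S : (1 : ℝ) ∈ S := hIcc ⟨zero_le_one, le_refl 1⟩
  have := h1S 0 1
  norm_num at this
  exact this

theorem stmt_0 {X Y : Type*} [TopologicalSpace X] [TopologicalSpace Y]
    (C : Set (X × Y)) (hpc : IsPathConnected C) (hcl : IsClosed C)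
    (hloc : LocallyDirectProduct C) :
    ∃ (A : Set X) (B : Set Y), C = A ×ˢ B := by
  refine ⟨Prod.fst '' C, Prod.snd '' C, ?_⟩
  ext ⟨a, b⟩
  constructor
  · intro h
    exact ⟨⟨(a, b), h, rfl⟩, ⟨(a, b), h, rfl⟩⟩
  · rintro ⟨⟨p, hp, rfl⟩, ⟨q, hq, rfl⟩⟩
    obtain ⟨γ, hγ⟩ := hpc.joinedIn p hp q hq
    set f : ℝ → X := fun s => (γ (Set.projIcc 0 1 zero_le_one s)).1 with hfdef
    set g : ℝ → Y := fun s => (γ (Set.projIcc 0 1 zero_le_one s)).2 with hgdef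
    have hcf : Continuous f := ((γ.continuous.comp continuous_projIcc)).fst
    have hcg : Continuous g := ((γ.continuous.comp continuous_projIcc)).snd
    set T : Set (ℝ × ℝ) := {r | (f r.1, g r.2) ∈ C ∧ (f r.2, g r.1) ∈ C} with hTdef
    have hTclosed : IsClosed T := by
      have : T = (fun r : ℝ × ℝ => ((f r.1, g r.2) : X × Y)) ⁻¹' C ∩
          (fun r : ℝ × ℝ => ((f r.2, g r.1) : X × Y)) ⁻¹' C := rfl
      rw [this]
      exact (hcl.preimage ((hcf.comp continuous_fst).prodMk (hcg.comp continuous_snd))).inter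
        (hcl.preimage ((hcf.comp continuous_snd).prodMk (hcg.comp continuous_fst)))
    have hTloc : ∀ r : ℝ × ℝ, ∃ (U' V' I' J' : Set ℝ),
        IsOpen U' ∧ IsOpen V' ∧ r.1 ∈ U' ∧ r.2 ∈ V' ∧ T ∩ U' ×ˢ V' = I' ×ˢ J' := by
      intro r
      obtain ⟨U, V, I, J, hUo, hVo, _, _, hU, hV, hUV⟩ := hloc (f r.1, g r.2)
      obtain ⟨U2, V2, I2, J2, hU2o, hV2o, _, _, hU2, hV2b, hUV2⟩ := hloc (f r.2, g r.1)
      refine ⟨f ⁻¹' U ∩ g ⁻¹' V2, f ⁻¹' U2 ∩ g ⁻¹' V,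
        (f ⁻¹' U ∩ g ⁻¹' V2) ∩ (f ⁻¹' I ∩ g ⁻¹' J2),
        (f ⁻¹' U2 ∩ g ⁻¹' V) ∩ (f ⁻¹' I2 ∩ g ⁻¹' J),
        (hUo.preimage hcf).inter (hV2o.preimage hcg),
        (hU2o.preimage hcf).inter (hVo.preimage hcg),
        ⟨hU, hV2b⟩, ⟨hU2, hV⟩, ?_⟩
      ext ⟨s, t⟩
      constructor
      · rintro ⟨⟨h1, h2⟩, ⟨hsU, hsV2⟩, htU2, htV⟩
        have m1 : ((f s, g t) : X × Y) ∈ I ×ˢ J := by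
          rw [← hUV]; exact ⟨h1, hsU, htV⟩
        have m2 : ((f t, g s) : X × Y) ∈ I2 ×ˢ J2 := by
          rw [← hUV2]; exact ⟨h2, htU2, hsV2⟩
        exact ⟨⟨⟨hsU, hsV2⟩, m1.1, m2.2⟩, ⟨htU2, htV⟩, m2.1, m1.2⟩
      · rintro ⟨⟨⟨hsU, hsV2⟩, hsI, hsJ2⟩, ⟨htU2, htV⟩, htI2, htJ⟩
        have c1 : ((f s, g t) : X × Y) ∈ C := by
          have : ((f s, g t) : X × Y) ∈ I ×ˢ J := ⟨hsI, htJ⟩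
          rw [← hUV] at this; exact this.1
        have c2 : ((f t, g s) : X × Y) ∈ C := by
          have : ((f t, g s) : X × Y) ∈ I2 ×ˢ J2 := ⟨htI2, hsJ2⟩
          rw [← hUV2] at this; exact this.1
        exact ⟨⟨c1, c2⟩, ⟨hsU, hsV2⟩, htU2, htV⟩
    have hdiag : ∀ r : ℝ, ((r, r) : ℝ × ℝ) ∈ T := fun r => ⟨hγ _, hγ _⟩
    have hsymm : ∀ r ∈ T, ((r.2, r.1) : ℝ × ℝ) ∈ T := fun r hr => ⟨hr.2, hr.1⟩
    have h01 : ((0 : ℝ), (1 : ℝ)) ∈ T := aux_real T hTclosed hTloc hdiag hsymm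
    have hf0 : f 0 = p.1 := by
      have e0 : Set.projIcc (0 : ℝ) 1 zero_le_one 0 = 0 := by
        apply Subtype.ext
        rw [Set.projIcc_left]
        rfl
      rw [hfdef]
      simp only [e0]
      rw [γ.source]
    have hg1 : g 1 = q.2 := by
      have e1 : Set.projIcc (0 : ℝ) 1 zero_le_one 1 = 1 := by
        apply Subtype.ext
        rw [Set.projIcc_right]
        rfl
      rw [hgdef]
      simp only [e1]
      rw [γ.target]
    have := h01.1
    rwa [hf0, hg1] at this
end

section
/- Let X and Y be topological spaces and let C be a path-connected closed subset of X × Y that is locally direct product. Then C = A × B, where A = { x ∈ X | ∃ y ∈ Y, (x,y) ∈ C } is the projection of C to X and B = { y ∈ Y | ∃ x ∈ X, (x,y) ∈ C } is the projection of C to Y. -/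
/-!
Join `(x, y₀)` to `(x₀, y)` by a path `γ = (α, β)` in `C` and prove `α [0, t] × β [0, t] ⊆ C`
by continuous induction on `t`; the set of such `t` is closed because `C` is. To pass a good `t`,
note that `P = α [0, t]` is compact and connected with `P × {β t} ⊆ C`. Covering `P × {β t}` by
finitely many boxes on which `C` is a rectangle, for `y'` near `β t` the condition `(x, y') ∈ C`
is locally constant in `x ∈ P`, hence constant on `P`; and it holds at `x = α t` when `y' = β u`
with `u` near `t`, by the box around `γ t`. The other coordinate is handled symmetrically.
-/

open Set Filter Topology

namespace LocallyDirectProduct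

variable {X Y : Type*} [TopologicalSpace X] [TopologicalSpace Y] {C : Set (X × Y)}

lemma exists_isOpen_mk_mem (hloc : LocallyDirectProduct C) (p : X × Y) :
    ∃ (U : Set X) (V : Set Y), IsOpen U ∧ IsOpen V ∧ p.1 ∈ U ∧ p.2 ∈ V ∧
      ∀ q ∈ C ∩ U ×ˢ V, ∀ q' ∈ C ∩ U ×ˢ V, (q.1, q'.2) ∈ C := by
  obtain ⟨U, V, I, J, hU, hV, -, -, hpU, hpV, hCUV⟩ := hloc p
  refine ⟨U, V, hU, hV, hpU, hpV, fun q hq q' hq' => ?_⟩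
  rw [hCUV] at hq hq'
  have hmix : (q.1, q'.2) ∈ I ×ˢ J := ⟨hq.1, hq'.2⟩
  rw [← hCUV] at hmix
  exact hmix.1

lemma preimage_swap (hloc : LocallyDirectProduct C) :
    LocallyDirectProduct (Prod.swap ⁻¹' C) := by
  intro p
  obtain ⟨U, V, I, J, hU, hV, hIU, hJV, hpU, hpV, hCUV⟩ := hloc p.swap
  refine ⟨V, U, J, I, hV, hU, hJV, hIU, hpV, hpU, ?_⟩
  rw [← preimage_swap_prod U V, ← preimage_inter, hCUV, preimage_swap_prod]

lemma eventually_forall_mk_mem (hloc : LocallyDirectProduct C) {P : Set X}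
    (hPc : IsCompact P) (hPconn : IsPreconnected P) {x₀ : X} (hx₀ : x₀ ∈ P) {y : Y}
    (hy : ∀ x ∈ P, (x, y) ∈ C) :
    ∀ᶠ y' in 𝓝 y, (x₀, y') ∈ C → ∀ x ∈ P, (x, y') ∈ C := by
  have hlocal : ∀ᶠ y' in 𝓝 y, ∀ x ∈ P,
      x ∈ P → ∀ᶠ z in 𝓝[P] x, ((x, y') ∈ C ↔ (z, y') ∈ C) := by
    refine hPc.eventually_forall_of_forall_eventually fun x _ => ?_
    obtain ⟨U, V, hU, hV, hxU, hyV, hmix⟩ := hloc.exists_isOpen_mk_mem (x, y)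
    filter_upwards [prod_mem_nhds (hV.mem_nhds hyV) (hU.mem_nhds hxU)]
    rintro ⟨y', x'⟩ ⟨hy'V, hx'U⟩ hx'P
    filter_upwards [mem_nhdsWithin_of_mem_nhds (hU.mem_nhds hx'U), self_mem_nhdsWithin]
      with z hzU hzP
    exact ⟨fun h => hmix (z, y) ⟨hy z hzP, hzU, hyV⟩ (x', y') ⟨h, hx'U, hy'V⟩,
      fun h => hmix (x', y) ⟨hy x' hx'P, hx'U, hyV⟩ (z, y') ⟨h, hzU, hy'V⟩⟩
  filter_upwards [hlocal] with y' hy' hx₀y' x hx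
  exact (hPconn.induction₂ (fun a b => (a, y') ∈ C ↔ (b, y') ∈ C) (fun a ha => hy' a ha ha)
    (fun _ _ _ _ _ _ => Iff.trans) (fun _ _ _ _ => Iff.symm) hx₀ hx).1 hx₀y'

variable {γ : unitInterval → X × Y}

lemma eventually_forall_le_mk_mem (hloc : LocallyDirectProduct C) (hγ : Continuous γ)
    (hγC : ∀ t, γ t ∈ C) {t : unitInterval} (ht : ∀ s ≤ t, ((γ s).1, (γ t).2) ∈ C) :
    ∀ᶠ u in 𝓝 t, ∀ s ≤ t, ((γ s).1, (γ u).2) ∈ C := by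
  have hα : Continuous fun s => (γ s).1 := hγ.fst
  have hspread := hloc.eventually_forall_mk_mem (isClosed_Iic.isCompact.image hα)
    (isPreconnected_Iic.image _ hα.continuousOn) (mem_image_of_mem _ (le_refl t))
    (by rintro _ ⟨s, hs, rfl⟩; exact ht s hs)
  obtain ⟨U, V, hU, hV, htU, htV, hmix⟩ := hloc.exists_isOpen_mk_mem (γ t)
  have hbox : ∀ᶠ u in 𝓝 t, γ u ∈ U ×ˢ V :=
    hγ.continuousAt.preimage_mem_nhds ((hU.prod hV).mem_nhds ⟨htU, htV⟩)
  filter_upwards [hγ.snd.continuousAt.eventually hspread, hbox] with u hu hbu s hs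
  exact hu (hmix (γ t) ⟨hγC t, htU, htV⟩ (γ u) ⟨hγC u, hbu⟩) _ (mem_image_of_mem _ hs)

lemma mk_fst_snd_mem_of_continuous (hcl : IsClosed C) (hloc : LocallyDirectProduct C)
    (hγ : Continuous γ) (hγC : ∀ t, γ t ∈ C) (s s' : unitInterval) :
    ((γ s).1, (γ s').2) ∈ C := by
  set K := {t : unitInterval | ∀ s ≤ t, ∀ s' ≤ t, ((γ s).1, (γ s').2) ∈ C}
  have hKclosed : IsClosed K := by
    have hK : K = ⋂ (s) (s'), {t | ((γ (min s t)).1, (γ (min s' t)).2) ∈ C} := by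
      ext t
      simp only [K, mem_iInter, mem_ofPred_eq]
      refine ⟨fun h s s' => h _ (min_le_right _ _) _ (min_le_right _ _),
        fun h s hs s' hs' => ?_⟩
      simpa only [min_eq_left hs, min_eq_left hs'] using h s s'
    rw [hK]
    exact isClosed_iInter fun s => isClosed_iInter fun s' => hcl.preimage (by fun_prop)
  have hK0 : 0 ∈ K := by
    intro s hs s' hs'
    rw [le_antisymm hs unitInterval.nonneg', le_antisymm hs' unitInterval.nonneg']
    exact hγC 0
  have hKgt : ∀ t ∈ K ∩ Ico 0 1, K ∈ 𝓝[>] t := by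
    rintro t ⟨ht, -, ht1⟩
    obtain ⟨U, V, hU, hV, htU, htV, hmix⟩ := hloc.exists_isOpen_mk_mem (γ t)
    have hgood : ∀ᶠ u in 𝓝 t, (∀ s ≤ t, ((γ s).1, (γ u).2) ∈ C) ∧
        (∀ s ≤ t, ((γ u).1, (γ s).2) ∈ C) ∧ γ u ∈ U ×ˢ V :=
      (hloc.eventually_forall_le_mk_mem hγ hγC fun s hs => ht s hs t le_rfl).and <|
        (hloc.preimage_swap.eventually_forall_le_mk_mem (continuous_swap.comp hγ) hγC
          fun s hs => ht t le_rfl s hs).and <|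
        hγ.continuousAt.preimage_mem_nhds ((hU.prod hV).mem_nhds ⟨htU, htV⟩)
    obtain ⟨c, htc, hc⟩ := exists_Ico_subset_of_mem_nhds hgood ⟨1, ht1⟩
    filter_upwards [Ioo_mem_nhdsGT htc] with v hv s hs s' hs'
    rcases le_or_gt s t with hst | hst <;> rcases le_or_gt s' t with hs't | hs't
    · exact ht s hst s' hs't
    · exact (hc ⟨hs't.le, hs'.trans_lt hv.2⟩).1 s hst
    · exact (hc ⟨hst.le, hs.trans_lt hv.2⟩).2.1 s' hs't
    · exact hmix (γ s) ⟨hγC s, (hc ⟨hst.le, hs.trans_lt hv.2⟩).2.2⟩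
        (γ s') ⟨hγC s', (hc ⟨hs't.le, hs'.trans_lt hv.2⟩).2.2⟩
  have hK1 : 1 ∈ K := (hKclosed.inter isClosed_Icc).Icc_subset_of_forall_mem_nhdsWithin hK0 hKgt
    ⟨unitInterval.nonneg', le_rfl⟩
  exact hK1 s unitInterval.le_one' s' unitInterval.le_one'

end LocallyDirectProduct

theorem stmt_1 {X Y : Type*} [TopologicalSpace X] [TopologicalSpace Y]
    (C : Set (X × Y)) (hpc : IsPathConnected C) (hcl : IsClosed C)
    (hloc : LocallyDirectProduct C) :
    C = {x : X | ∃ y : Y, (x, y) ∈ C} ×ˢ {y : Y | ∃ x : X, (x, y) ∈ C} := by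
  refine Subset.antisymm (fun p hp => ⟨⟨p.2, hp⟩, ⟨p.1, hp⟩⟩) ?_
  rintro ⟨x, y⟩ ⟨⟨y₀, hxy₀⟩, ⟨x₀, hx₀y⟩⟩
  obtain ⟨γ, hγC⟩ := hpc.joinedIn _ hxy₀ _ hx₀y
  simpa using hloc.mk_fst_snd_mem_of_continuous hcl γ.continuous hγC 0 1
end

section
/- Let X and Y be topological spaces and let C be a closed subset of X × Y that is locally direct product. Let x : [0,1] → X and y : [0,1] → Y be continuous maps such that (x(t), y(t)) ∈ C for every t ∈ [0,1]. Then (x(0), y(1)) ∈ C and (x(1), y(0)) ∈ C. -/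
open Set

/-- The "mixing" form of the local direct product property, pulled back to ℝ². -/
private def MixT (T : Set (ℝ × ℝ)) : Prop :=
  ∀ p : ℝ × ℝ, ∃ U V : Set ℝ, IsOpen U ∧ IsOpen V ∧ p.1 ∈ U ∧ p.2 ∈ V ∧
    ∀ a b a' b' : ℝ, a ∈ U → a' ∈ U → b ∈ V → b' ∈ V →
      (a, b) ∈ T → (a', b') ∈ T → (a, b') ∈ T

private lemma band_lemma {T : Set (ℝ × ℝ)}
    (hdiag : ∀ s : ℝ, (s, s) ∈ T) (hblock : MixT T) :
    ∃ δ > 0, ∀ s t : ℝ, s ∈ Icc (0:ℝ) 1 → t ∈ Icc (0:ℝ) 1 → |s - t| < δ → (s, t) ∈ T := by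
  choose U V hU hV hpU hpV hmix using hblock
  obtain ⟨δ, hδ, hball⟩ := lebesgue_number_lemma_of_metric
    (isCompact_Icc (a := (0:ℝ)) (b := 1))
    (c := fun a : ↥(Icc (0:ℝ) 1) => U (↑a, ↑a) ∩ V (↑a, ↑a))
    (fun a => (hU _).inter (hV _))
    (fun a ha => mem_iUnion.2 ⟨⟨a, ha⟩, ⟨hpU (a, a), hpV (a, a)⟩⟩)
  refine ⟨δ, hδ, fun s t hs ht hst => ?_⟩
  obtain ⟨i, hi⟩ := hball s hs
  have hsW : s ∈ U (↑i, ↑i) ∩ V (↑i, ↑i) := hi (Metric.mem_ball_self hδ)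
  have htW : t ∈ U (↑i, ↑i) ∩ V (↑i, ↑i) := hi (by
    simpa [Metric.mem_ball, Real.dist_eq, abs_sub_comm] using hst)
  exact hmix (↑i, ↑i) s s t t hsW.1 htW.1 hsW.2 htW.2 (hdiag s) (hdiag t)

private lemma col_lemma {T : Set (ℝ × ℝ)} (hT : IsClosed T) (hblock : MixT T)
    {δ : ℝ} (hδ : 0 < δ)
    (hband : ∀ s t : ℝ, s ∈ Icc (0:ℝ) 1 → t ∈ Icc (0:ℝ) 1 → |s - t| < δ → (s, t) ∈ T)
    {r : ℝ} (hr : r ∈ Ico (0:ℝ) 1)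
    (hQ : ∀ a b : ℝ, a ∈ Icc 0 r → b ∈ Icc 0 r → (a, b) ∈ T) :
    ∃ ε > 0, ε ≤ δ / 2 ∧ ε ≤ 1 - r ∧
      ∀ t' v : ℝ, t' ∈ Icc r (r + ε) → v ∈ Icc 0 r → (v, t') ∈ T := by
  choose U V hU hV hpU hpV hmix using hblock
  obtain ⟨F, hF⟩ := (isCompact_Icc (a := (0:ℝ)) (b := r)).elim_finite_subcover
    (fun u : ↥(Icc (0:ℝ) r) => U (↑u, r)) (fun u => hU _)
    (fun u hu => mem_iUnion.2 ⟨⟨u, hu⟩, hpU (u, r)⟩)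
  have hVopen : IsOpen (⋂ i ∈ F, V (↑i, r)) := isOpen_biInter_finset (fun i _ => hV _)
  have hrV : r ∈ ⋂ i ∈ F, V (↑i, r) := mem_iInter₂.2 fun i _ => hpV _
  obtain ⟨ε₀, hε₀, hball⟩ := Metric.isOpen_iff.1 hVopen r hrV
  have h1r : (0:ℝ) < 1 - r := by linarith [hr.2]
  refine ⟨min (min (ε₀ / 2) (δ / 2)) (1 - r),
    lt_min (lt_min (by linarith) (by linarith)) h1r,
    le_trans (min_le_left _ _) (min_le_right _ _), min_le_right _ _, ?_⟩
  set ε := min (min (ε₀ / 2) (δ / 2)) (1 - r) with hε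
  intro t' v ht' hv
  have hεδ : ε ≤ δ / 2 := le_trans (min_le_left _ _) (min_le_right _ _)
  have hεε₀ : ε ≤ ε₀ / 2 := le_trans (min_le_left _ _) (min_le_left _ _)
  have hε1 : ε ≤ 1 - r := min_le_right _ _
  have ht'1 : t' ≤ 1 := by linarith [ht'.2]
  have ht'0 : 0 ≤ t' := le_trans hr.1 ht'.1
  have ht'δ : |r - t'| < δ := by
    rw [abs_sub_comm, abs_of_nonneg (by linarith [ht'.1])]
    linarith [ht'.2]
  have ht'V : ∀ i ∈ F, t' ∈ V (↑i, r) := by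
    intro i hi
    have : t' ∈ Metric.ball r ε₀ := by
      rw [Metric.mem_ball, Real.dist_eq, abs_of_nonneg (by linarith [ht'.1])]
      linarith [ht'.2]
    exact mem_iInter₂.1 (hball this) i hi
  -- inner induction, going down from r to 0 (reflected)
  have key : Icc (0:ℝ) r ⊆ {w : ℝ | (r - w, t') ∈ T} := by
    apply IsClosed.Icc_subset_of_forall_mem_nhdsWithin
    · exact (hT.preimage (by fun_prop :
        Continuous fun w : ℝ => ((r - w, t') : ℝ × ℝ))).inter isClosed_Icc
    · show (r - 0, t') ∈ T
      rw [sub_zero]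
      exact hband r t' ⟨hr.1, hr.2.le⟩ ⟨ht'0, ht'1⟩ ht'δ
    · rintro w ⟨hwg, hw0, hwr⟩
      have hv₀ : r - w ∈ Icc (0:ℝ) r := ⟨by linarith, by linarith⟩
      obtain ⟨i, hiF, hiU⟩ : ∃ i ∈ F, r - w ∈ U (↑i, r) := by
        simpa using hF hv₀
      have hN : {w' : ℝ | r - w' ∈ U (↑i, r)} ∈ nhds w :=
        ((hU _).preimage (by fun_prop : Continuous fun w' : ℝ => r - w')).mem_nhds hiU
      refine Filter.mem_of_superset
        (Filter.inter_mem (mem_nhdsWithin_of_mem_nhds hN)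
          (Ioc_mem_nhdsGT_of_mem ⟨le_rfl, hwr⟩)) ?_
      rintro w' ⟨hw'U, hw'w, hw'r⟩
      have hv' : r - w' ∈ Icc (0:ℝ) r := ⟨by linarith, by linarith⟩
      exact hmix (↑i, r) (r - w') r (r - w) t' hw'U hiU (hpV (↑i, r)) (ht'V i hiF)
        (hQ _ r hv' ⟨hr.1, le_rfl⟩) hwg
  have := key (show r - v ∈ Icc (0:ℝ) r from ⟨by linarith [hv.2], by linarith [hv.1]⟩)
  simpa using this

theorem stmt_2 {X Y : Type*} [TopologicalSpace X] [TopologicalSpace Y]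
    (C : Set (X × Y)) (hcl : IsClosed C) (hloc : LocallyDirectProduct C)
    (x : unitInterval → X) (y : unitInterval → Y)
    (hx : Continuous x) (hy : Continuous y)
    (hxy : ∀ t : unitInterval, (x t, y t) ∈ C) :
    (x 0, y 1) ∈ C ∧ (x 1, y 0) ∈ C := by
  set x' : ℝ → X := fun s => x (projIcc 0 1 zero_le_one s) with hx'def
  set y' : ℝ → Y := fun s => y (projIcc 0 1 zero_le_one s) with hy'def
  have hcx : Continuous x' := hx.comp continuous_projIcc
  have hcy : Continuous y' := hy.comp continuous_projIcc
  set T : Set (ℝ × ℝ) := {p | (x' p.1, y' p.2) ∈ C} with hTdef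
  have hT : IsClosed T := hcl.preimage
    ((hcx.comp continuous_fst).prodMk (hcy.comp continuous_snd))
  have hdiag : ∀ s : ℝ, (s, s) ∈ T := fun s => hxy _
  have hblock : MixT T := by
    intro p
    obtain ⟨U₀, V₀, I₀, J₀, hU₀, hV₀, _, _, hp1, hp2, hprod⟩ := hloc (x' p.1, y' p.2)
    refine ⟨x' ⁻¹' U₀, y' ⁻¹' V₀, hU₀.preimage hcx, hV₀.preimage hcy, hp1, hp2, ?_⟩
    intro a b a' b' ha ha' hb hb' hab ha'b'
    have h1 : (x' a, y' b) ∈ I₀ ×ˢ J₀ := hprod ▸ ⟨hab, ha, hb⟩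
    have h2 : (x' a', y' b') ∈ I₀ ×ˢ J₀ := hprod ▸ ⟨ha'b', ha', hb'⟩
    have h3 : (x' a, y' b') ∈ I₀ ×ˢ J₀ := ⟨h1.1, h2.2⟩
    rw [← hprod] at h3
    exact h3.1
  obtain ⟨δ, hδ, hband⟩ := band_lemma hdiag hblock
  -- the swapped set
  set T' : Set (ℝ × ℝ) := Prod.swap ⁻¹' T with hT'def
  have hT'cl : IsClosed T' := hT.preimage continuous_swap
  have hblock' : MixT T' := by
    intro p
    obtain ⟨U, V, hU, hV, h1, h2, hmix⟩ := hblock (p.2, p.1)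
    refine ⟨V, U, hV, hU, h2, h1, ?_⟩
    intro a b a' b' ha ha' hb hb' hab ha'b'
    exact hmix b' a' b a hb' hb ha' ha ha'b' hab
  have hband' : ∀ s t : ℝ, s ∈ Icc (0:ℝ) 1 → t ∈ Icc (0:ℝ) 1 → |s - t| < δ → (s, t) ∈ T' :=
    fun s t hs ht h => hband t s ht hs (by rwa [abs_sub_comm])
  -- the set of good parameters
  set S : Set ℝ := {r | ∀ s t : ℝ, (max 0 (min s r), max 0 (min t r)) ∈ T} with hSdef
  have hScl : IsClosed S := by
    have : S = ⋂ (s : ℝ), ⋂ (t : ℝ),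
        (fun r : ℝ => ((max 0 (min s r), max 0 (min t r)) : ℝ × ℝ)) ⁻¹' T := by
      ext r; simp [hSdef, mem_iInter]
    rw [this]
    exact isClosed_iInter fun s => isClosed_iInter fun t => hT.preimage (by fun_prop)
  have hS0 : (0:ℝ) ∈ S := by
    intro s t
    rw [max_eq_left (min_le_right s 0), max_eq_left (min_le_right t 0)]
    exact hdiag 0
  have hQ_of_S : ∀ r : ℝ, r ∈ S → ∀ a b : ℝ, a ∈ Icc 0 r → b ∈ Icc 0 r → (a, b) ∈ T := by
    intro r hrS a b ha hb
    have := hrS a b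
    rwa [min_eq_left ha.2, max_eq_right ha.1, min_eq_left hb.2, max_eq_right hb.1] at this
  have hS_of_Q : ∀ r : ℝ, 0 ≤ r →
      (∀ a b : ℝ, a ∈ Icc 0 r → b ∈ Icc 0 r → (a, b) ∈ T) → r ∈ S := by
    intro r hr0 h s t
    exact h _ _ ⟨le_max_left _ _, max_le hr0 (min_le_right s r)⟩
      ⟨le_max_left _ _, max_le hr0 (min_le_right t r)⟩
  have hmain : Icc (0:ℝ) 1 ⊆ S := by
    apply IsClosed.Icc_subset_of_forall_mem_nhdsWithin (hScl.inter isClosed_Icc) hS0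
    rintro r ⟨hrS, hr0, hr1⟩
    have hQ := hQ_of_S r hrS
    have hQ' : ∀ a b : ℝ, a ∈ Icc 0 r → b ∈ Icc 0 r → (a, b) ∈ T' :=
      fun a b ha hb => hQ b a hb ha
    obtain ⟨ε₁, hε₁, hε₁δ, hε₁r, hcol⟩ := col_lemma hT hblock hδ hband ⟨hr0, hr1⟩ hQ
    obtain ⟨ε₂, hε₂, hε₂δ, hε₂r, hrow⟩ := col_lemma hT'cl hblock' hδ hband' ⟨hr0, hr1⟩ hQ'
    refine Filter.mem_of_superset
      (Ioc_mem_nhdsGT_of_mem ⟨le_rfl, lt_add_of_pos_right r (lt_min hε₁ hε₂)⟩) ?_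
    rintro r' ⟨hrr', hr'⟩
    have hr'0 : 0 ≤ r' := le_trans hr0 hrr'.le
    apply hS_of_Q r' hr'0
    intro a b ha hb
    have har' : a ≤ r' := ha.2
    have hbr' : b ≤ r' := hb.2
    have hr'ε₁ : r' ≤ r + ε₁ := le_trans hr' (by simp [min_le_left])
    have hr'ε₂ : r' ≤ r + ε₂ := le_trans hr' (by simp [min_le_right])
    rcases le_or_gt a r with haR | haR <;> rcases le_or_gt b r with hbR | hbR
    · exact hQ a b ⟨ha.1, haR⟩ ⟨hb.1, hbR⟩
    · exact hcol b a ⟨hbR.le, by linarith⟩ ⟨ha.1, haR⟩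
    · exact hrow a b ⟨haR.le, by linarith⟩ ⟨hb.1, hbR⟩
    · refine hband a b ⟨ha.1, by linarith⟩ ⟨hb.1, by linarith⟩ ?_
      rw [abs_sub_lt_iff]
      constructor <;> linarith
  have h1S := hQ_of_S 1 (hmain ⟨zero_le_one, le_rfl⟩)
  have e0 : projIcc (0:ℝ) 1 zero_le_one 0 = (0 : unitInterval) := by
    rw [projIcc_left]; rfl
  have e1 : projIcc (0:ℝ) 1 zero_le_one 1 = (1 : unitInterval) := by
    rw [projIcc_right]; rfl
  constructor
  · have h01 : (x' 0, y' 1) ∈ C := h1S 0 1 ⟨le_rfl, zero_le_one⟩ ⟨zero_le_one, le_rfl⟩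
    simpa only [hx'def, hy'def, e0, e1] using h01
  · have h10 : (x' 1, y' 0) ∈ C := h1S 1 0 ⟨zero_le_one, le_rfl⟩ ⟨le_rfl, zero_le_one⟩
    simpa only [hx'def, hy'def, e0, e1] using h10
end

section
/- Let D be a closed subset of [0,1] × [0,1] that is locally direct product and contains the diagonal, i.e., (t,t) ∈ D for every t ∈ [0,1]. Then D = [0,1] × [0,1]. -/
open Set Filter Topology Uniformity UniformSpace Relation

theorem Relation.ReflTransGen.exists_chain {α : Type*} {r : α → α → Prop} {a b : α}
    (h : ReflTransGen r a b) :
    ∃ (n : ℕ) (f : ℕ → α), f 0 = a ∧ f n = b ∧ ∀ i < n, r (f i) (f (i + 1)) := by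
  induction h with
  | refl => exact ⟨0, fun _ => a, rfl, rfl, by simp⟩
  | @tail c d _ hcd ih =>
    obtain ⟨n, f, h0, hn, hf⟩ := ih
    refine ⟨n + 1, fun i => if i ≤ n then f i else d, by simp [h0], by simp, fun i hi => ?_⟩
    rcases Nat.lt_or_ge i n with hin | hin
    · simpa [hin.le, Nat.succ_le_of_lt hin] using hf i hin
    · obtain rfl : i = n := by omega
      simpa [hn] using hcd

theorem Relation.ReflTransGen.of_rectangle {α : Type*} {r s : α → α → Prop} {a b : α}
    (hs : ∀ x, s x x)
    (hrect : ∀ x x' y y', r x x' → r y y' → s x y → s x' y' → s x y')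
    (h : ReflTransGen r a b) : s a b := by
  obtain ⟨n, f, rfl, rfl, hf⟩ := h.exists_chain
  have key : ∀ k i, i + k ≤ n → s (f i) (f (i + k)) := by
    intro k
    induction k with
    | zero => exact fun i _ => hs (f i)
    | succ k ih =>
      intro i hi
      refine hrect _ _ _ _ (hf i (by omega)) (hf (i + k) (by omega)) (ih i (by omega)) ?_
      rw [show i + (k + 1) = i + 1 + k by omega]
      exact ih (i + 1) (by omega)
  simpa using key n 0 (by simp)

theorem PreconnectedSpace.reflTransGen_of_mem_uniformity {X : Type*} [UniformSpace X]
    [PreconnectedSpace X] {V : SetRel X X} (hV : V ∈ 𝓤 X) (x y : X) :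
    ReflTransGen (fun a b => (a, b) ∈ V) x y :=
  PreconnectedSpace.induction₂' _
    (fun a => mem_of_superset (inter_mem (mem_nhds_left a hV) (mem_nhds_right a hV))
      fun _ hb => ⟨.single hb.1, .single hb.2⟩)
    ⟨fun _ _ _ => ReflTransGen.trans⟩ x y

namespace LocallyDirectProduct

variable {X Y : Type*} [UniformSpace X] [UniformSpace Y]

theorem exists_uniform_rectangle [CompactSpace X] [CompactSpace Y] {D : Set (X × Y)}
    (hD : LocallyDirectProduct D) :
    ∃ E ∈ 𝓤 X, ∃ F ∈ 𝓤 Y, ∀ x x' y y', (x, x') ∈ E → (y, y') ∈ F →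
      (x, y) ∈ D → (x', y') ∈ D → (x, y') ∈ D := by
  choose U V I J hU hV _ _ hpU hpV hDUV using hD
  obtain ⟨G, hG, hGUV⟩ := lebesgue_number_lemma isCompact_univ (fun p => (hU p).prod (hV p))
    fun p _ => mem_iUnion.2 ⟨p, hpU p, hpV p⟩
  obtain ⟨E, hE, F, hF, hEF⟩ := entourageProd_subset hG
  refine ⟨E, hE, F, hF, fun x x' y y' hx hy hxy hxy' => ?_⟩
  obtain ⟨p, hp⟩ := hGUV (x, y) trivial
  have hbox : ball x E ×ˢ ball y F ⊆ U p ×ˢ V p :=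
    (ball_entourageProd E F (x, y)).symm.subset.trans ((ball_mono hEF _).trans hp)
  have h₁ : (x, y) ∈ I p ×ˢ J p := hDUV p ▸ ⟨hxy, hbox ⟨mem_ball_self x hE, mem_ball_self y hF⟩⟩
  have h₂ : (x', y') ∈ I p ×ˢ J p := hDUV p ▸ ⟨hxy', hbox ⟨hx, hy⟩⟩
  have h₃ : (x, y') ∈ D ∩ U p ×ˢ V p := (hDUV p).symm ▸ ⟨h₁.1, h₂.2⟩
  exact h₃.1

theorem eq_univ_of_diagonal_subset [CompactSpace X] [PreconnectedSpace X] {D : Set (X × X)}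
    (hD : LocallyDirectProduct D) (hdiag : diagonal X ⊆ D) : D = univ := by
  obtain ⟨E, hE, F, hF, hrect⟩ := hD.exists_uniform_rectangle
  refine eq_univ_of_forall fun ⟨x, y⟩ => ?_
  refine (PreconnectedSpace.reflTransGen_of_mem_uniformity (inter_mem hE hF) x y).of_rectangle
    (s := fun a b => (a, b) ∈ D) (fun a => hdiag (mem_diagonal a)) ?_
  exact fun a a' b b' ha hb => hrect a a' b b' ha.1 hb.2

end LocallyDirectProduct

theorem stmt_6_general (D : Set (unitInterval × unitInterval))
    (hloc : LocallyDirectProduct D) (hdiag : ∀ t : unitInterval, (t, t) ∈ D) :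
    D = Set.univ :=
  hloc.eq_univ_of_diagonal_subset <| by rintro ⟨s, t⟩ (rfl : s = t); exact hdiag s

theorem stmt_6 (D : Set (unitInterval × unitInterval)) (hcl : IsClosed D)
    (hloc : LocallyDirectProduct D) (hdiag : ∀ t : unitInterval, (t, t) ∈ D) :
    D = Set.univ :=
  stmt_6_general D hloc hdiag
end

section
/- Let D be a closed subset of [0,1] × [0,1] that is locally direct product and contains the diagonal, i.e., (t,t) ∈ D for every t ∈ [0,1]. Let t₀ ∈ [0,1) be such that [0,t₀] × [0,t₀] ⊆ D. Then there exists t₁ ∈ (t₀, 1] such that [0,t₁] × [0,t₁] ⊆ D. -/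
lemma key_lemma (D : Set (unitInterval × unitInterval))
    (hloc : LocallyDirectProduct D) (hdiag : ∀ t : unitInterval, (t, t) ∈ D)
    (t₀ : unitInterval)
    (h : Set.Icc 0 t₀ ×ˢ Set.Icc 0 t₀ ⊆ D) :
    ∃ W : Set unitInterval, IsOpen W ∧ t₀ ∈ W ∧
      ∀ x ∈ W, ∀ y : unitInterval, y ≤ t₀ → (x, y) ∈ D := by
  classical
  set P : ℝ → Prop := fun r => ∃ W : Set unitInterval, IsOpen W ∧ t₀ ∈ W ∧
      ∀ x ∈ W, ∀ y : unitInterval, r ≤ (y : ℝ) → y ≤ t₀ → (x, y) ∈ D with hPdef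
  have Pmono : ∀ r r' : ℝ, r ≤ r' → P r → P r' := by
    rintro r r' hrr ⟨W, hWo, hWt, hW⟩
    exact ⟨W, hWo, hWt, fun x hx y hy hyt => hW x hx y (hrr.trans hy) hyt⟩
  have Pt₀ : P (t₀ : ℝ) := by
    obtain ⟨U, V, I, J, hU, hV, hIU, hJV, ht₀U, ht₀V, heq⟩ := hloc (t₀, t₀)
    refine ⟨U ∩ V, hU.inter hV, ⟨ht₀U, ht₀V⟩, ?_⟩
    rintro x ⟨hxU, hxV⟩ y hy hyt
    have hyt' : y = t₀ := le_antisymm hyt (Subtype.coe_le_coe.mp hy)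
    subst hyt'
    have hxI : x ∈ I := by
      have : (x, x) ∈ I ×ˢ J := heq ▸ (⟨hdiag x, hxU, hxV⟩ : (x,x) ∈ D ∩ U ×ˢ V)
      exact this.1
    have hyJ : y ∈ J := by
      have : (y, y) ∈ I ×ˢ J := heq ▸ (⟨hdiag y, ht₀U, ht₀V⟩ : (y,y) ∈ D ∩ U ×ˢ V)
      exact this.2
    have : (x, y) ∈ D ∩ U ×ˢ V := heq ▸ (⟨hxI, hyJ⟩ : (x, y) ∈ I ×ˢ J)
    exact this.1
  set S : Set ℝ := {r | r ∈ Set.Icc (0:ℝ) (t₀:ℝ) ∧ P r} with hSdef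
  have hSne : S.Nonempty := ⟨(t₀:ℝ), ⟨t₀.2.1, le_refl _⟩, Pt₀⟩
  have hSbdd : BddBelow S := ⟨0, fun r hr => hr.1.1⟩
  set c : ℝ := sInf S with hcdef
  have hc0 : 0 ≤ c := le_csInf hSne fun r hr => hr.1.1
  have hct₀ : c ≤ (t₀:ℝ) := csInf_le hSbdd ⟨⟨t₀.2.1, le_refl _⟩, Pt₀⟩
  have hc1 : c ≤ 1 := hct₀.trans t₀.2.2
  set cᵤ : unitInterval := ⟨c, hc0, hc1⟩ with hcu
  -- the step: P (c - δ/2) for some δ > 0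
  obtain ⟨U, V, I, J, hU, hV, hIU, hJV, ht₀U, hcV, heq⟩ := hloc (t₀, cᵤ)
  obtain ⟨δ, hδpos, hball⟩ := Metric.isOpen_iff.mp hV cᵤ hcV
  obtain ⟨r, hrS, hrδ⟩ := exists_lt_of_csInf_lt hSne (by linarith : c < c + δ)
  obtain ⟨⟨hr0, hrt₀⟩, hPr⟩ := hrS
  have hcr : c ≤ r := csInf_le hSbdd ⟨⟨hr0, hrt₀⟩, hPr⟩
  set rᵤ : unitInterval := ⟨r, hr0, hrt₀.trans t₀.2.2⟩ with hru
  have hrV : rᵤ ∈ V := by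
    apply hball
    simp only [Metric.mem_ball, Subtype.dist_eq, Real.dist_eq]
    rw [abs_lt]
    exact ⟨by show -δ < r - c; linarith, by show r - c < δ; linarith⟩
  obtain ⟨Wr, hWro, hWrt, hWr⟩ := hPr
  have hrt₀u : rᵤ ≤ t₀ := Subtype.mk_le_mk.mpr hrt₀
  have Pstep : P (c - δ/2) := by
    refine ⟨Wr ∩ U, hWro.inter hU, ⟨hWrt, ht₀U⟩, ?_⟩
    rintro x ⟨hxW, hxU⟩ y hy hyt
    by_cases hyr : r ≤ (y:ℝ)
    · exact hWr x hxW y hyr hyt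
    · push_neg at hyr
      have hyV : y ∈ V := by
        apply hball
        simp only [Metric.mem_ball, Subtype.dist_eq, Real.dist_eq]
        rw [abs_lt]
        exact ⟨by show -δ < (y:ℝ) - c; linarith, by show (y:ℝ) - c < δ; linarith⟩
      have hyJ : y ∈ J := by
        have hD : (t₀, y) ∈ D := h ⟨⟨unitInterval.nonneg', le_refl _⟩, ⟨unitInterval.nonneg', hyt⟩⟩
        have : (t₀, y) ∈ I ×ˢ J := heq ▸ (⟨hD, ht₀U, hyV⟩ : (t₀, y) ∈ D ∩ U ×ˢ V)
        exact this.2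
      have hxI : x ∈ I := by
        have hD : (x, rᵤ) ∈ D := hWr x hxW rᵤ (le_refl _) hrt₀u
        have : (x, rᵤ) ∈ I ×ˢ J := heq ▸ (⟨hD, hxU, hrV⟩ : (x, rᵤ) ∈ D ∩ U ×ˢ V)
        exact this.1
      have : (x, y) ∈ D ∩ U ×ˢ V := heq ▸ (⟨hxI, hyJ⟩ : (x, y) ∈ I ×ˢ J)
      exact this.1
  -- conclude c = 0 and P 0
  have hm : max (c - δ/2) 0 ∈ S :=
    ⟨⟨le_max_right _ _, max_le (by linarith) t₀.2.1⟩, Pmono _ _ (le_max_left _ _) Pstep⟩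
  have hcm : c ≤ max (c - δ/2) 0 := csInf_le hSbdd hm
  have hc0' : c ≤ 0 := by
    rcases le_max_iff.mp hcm with h1 | h1
    · linarith
    · exact h1
  have P0 : P 0 := Pmono _ _ (by linarith) Pstep
  obtain ⟨W, hWo, hWt, hW⟩ := P0
  exact ⟨W, hWo, hWt, fun x hx y hyt => hW x hx y y.2.1 hyt⟩


theorem stmt_7 (D : Set (unitInterval × unitInterval)) (hcl : IsClosed D)
    (hloc : LocallyDirectProduct D) (hdiag : ∀ t : unitInterval, (t, t) ∈ D)
    (t₀ : unitInterval) (ht₀ : t₀ < 1)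
    (h : Set.Icc 0 t₀ ×ˢ Set.Icc 0 t₀ ⊆ D) :
    ∃ t₁ : unitInterval, t₀ < t₁ ∧ Set.Icc 0 t₁ ×ˢ Set.Icc 0 t₁ ⊆ D := by
  classical
  -- transpose of D
  set D' : Set (unitInterval × unitInterval) := {p | (p.2, p.1) ∈ D} with hD'
  have hloc' : LocallyDirectProduct D' := by
    intro p
    obtain ⟨U, V, I, J, hU, hV, hIU, hJV, h1, h2, heq⟩ := hloc (p.2, p.1)
    refine ⟨V, U, J, I, hV, hU, hJV, hIU, h2, h1, ?_⟩
    ext ⟨a, b⟩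
    constructor
    · rintro ⟨hab, haV, hbU⟩
      have : (b, a) ∈ I ×ˢ J := heq ▸ (⟨hab, hbU, haV⟩ : (b,a) ∈ D ∩ U ×ˢ V)
      exact ⟨this.2, this.1⟩
    · rintro ⟨haJ, hbI⟩
      have : (b, a) ∈ D ∩ U ×ˢ V := heq ▸ (⟨hbI, haJ⟩ : (b,a) ∈ I ×ˢ J)
      exact ⟨this.1, this.2.2, this.2.1⟩
  have hdiag' : ∀ t : unitInterval, (t, t) ∈ D' := fun t => hdiag t
  have h' : Set.Icc 0 t₀ ×ˢ Set.Icc 0 t₀ ⊆ D' := by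
    rintro ⟨a, b⟩ ⟨ha, hb⟩
    exact h ⟨hb, ha⟩
  obtain ⟨W₁, hW₁o, hW₁t, hW₁⟩ := key_lemma D hloc hdiag t₀ h
  obtain ⟨W₂, hW₂o, hW₂t, hW₂⟩ := key_lemma D' hloc' hdiag' t₀ h'
  obtain ⟨U₀, V₀, I₀, J₀, hU₀, hV₀, hI₀U, hJ₀V, ht₀U₀, ht₀V₀, heq₀⟩ := hloc (t₀, t₀)
  have hNo : IsOpen (W₁ ∩ W₂ ∩ U₀ ∩ V₀) := ((hW₁o.inter hW₂o).inter hU₀).inter hV₀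
  have ht₀N : t₀ ∈ W₁ ∩ W₂ ∩ U₀ ∩ V₀ := ⟨⟨⟨hW₁t, hW₂t⟩, ht₀U₀⟩, ht₀V₀⟩
  obtain ⟨ε, hεpos, hball⟩ := Metric.isOpen_iff.mp hNo t₀ ht₀N
  -- pick t₁
  have ht₀1 : (t₀ : ℝ) < 1 := ht₀
  set s : ℝ := min 1 ((t₀:ℝ) + ε/2) with hs
  have hs0 : 0 ≤ s := le_min zero_le_one (by linarith [t₀.2.1])
  have hs1 : s ≤ 1 := min_le_left _ _
  set t₁ : unitInterval := ⟨s, hs0, hs1⟩ with ht₁def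
  have ht₀t₁ : (t₀:ℝ) < s := lt_min ht₀1 (by linarith)
  have hst₀ : s ≤ (t₀:ℝ) + ε/2 := min_le_right _ _
  have hIccN : ∀ z : unitInterval, t₀ ≤ z → z ≤ t₁ → z ∈ W₁ ∩ W₂ ∩ U₀ ∩ V₀ := by
    intro z h1 h2
    apply hball
    simp only [Metric.mem_ball, Subtype.dist_eq, Real.dist_eq]
    have h1' : (t₀:ℝ) ≤ z := h1
    have h2' : (z:ℝ) ≤ s := h2
    rw [abs_lt]
    constructor <;> linarith
  refine ⟨t₁, Subtype.mk_lt_mk.mpr ht₀t₁, ?_⟩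
  rintro ⟨x, y⟩ ⟨⟨-, hx⟩, ⟨-, hy⟩⟩
  by_cases hxt : x ≤ t₀ <;> by_cases hyt : y ≤ t₀
  · exact h ⟨⟨unitInterval.nonneg', hxt⟩, ⟨unitInterval.nonneg', hyt⟩⟩
  · -- x ≤ t₀ < y
    have hyN := hIccN y (le_of_not_ge hyt) hy
    exact hW₂ y hyN.1.1.2 x hxt
  · have hxN := hIccN x (le_of_not_ge hxt) hx
    exact hW₁ x hxN.1.1.1 y hyt
  · have hxN := hIccN x (le_of_not_ge hxt) hx
    have hyN := hIccN y (le_of_not_ge hyt) hy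
    have hxI : x ∈ I₀ := by
      have : (x, x) ∈ I₀ ×ˢ J₀ := heq₀ ▸ (⟨hdiag x, hxN.1.2, hxN.2⟩ : (x,x) ∈ D ∩ U₀ ×ˢ V₀)
      exact this.1
    have hyJ : y ∈ J₀ := by
      have : (y, y) ∈ I₀ ×ˢ J₀ := heq₀ ▸ (⟨hdiag y, hyN.1.2, hyN.2⟩ : (y,y) ∈ D ∩ U₀ ×ˢ V₀)
      exact this.2
    have : (x, y) ∈ D ∩ U₀ ×ˢ V₀ := heq₀ ▸ (⟨hxI, hyJ⟩ : (x,y) ∈ I₀ ×ˢ J₀)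
    exact this.1
end

section
/- Let D be a closed subset of [0,1] × [0,1] that is locally direct product. Let 0 ≤ t₀ < t₂ ≤ 1 be such that [0,t₀] × [0,t₀] ⊆ D and [t₀,t₂] × [t₀,t₂] ⊆ D. Then there exists t₃ ∈ (t₀, t₂] such that [0,t₀] × [t₀,t₃] ⊆ D. -/
theorem stmt_9 (D : Set (unitInterval × unitInterval)) (hcl : IsClosed D)
    (hloc : LocallyDirectProduct D)
    (t₀ t₂ : unitInterval) (ht : t₀ < t₂)
    (h₀ : Set.Icc 0 t₀ ×ˢ Set.Icc 0 t₀ ⊆ D)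
    (h₂ : Set.Icc t₀ t₂ ×ˢ Set.Icc t₀ t₂ ⊆ D) :
    ∃ t₃ : unitInterval, t₀ < t₃ ∧ t₃ ≤ t₂ ∧ Set.Icc 0 t₀ ×ˢ Set.Icc t₀ t₃ ⊆ D := by
  classical
  haveI : Fact ((0:ℝ) ≤ 1) := ⟨zero_le_one⟩
  -- the set of left endpoints `a` such that some strip `[a,t₀] × [t₀,s]` (with `s > t₀`)
  -- is contained in `D`
  set A : Set unitInterval :=
    {a | a ≤ t₀ ∧ ∃ s, t₀ < s ∧ s ≤ t₂ ∧ Set.Icc a t₀ ×ˢ Set.Icc t₀ s ⊆ D} with hAdef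
  have ht₀A : t₀ ∈ A := by
    refine ⟨le_refl _, t₂, ht, le_refl _, ?_⟩
    rintro ⟨x, y⟩ ⟨hx, hy⟩
    exact h₂ ⟨⟨hx.1, hx.2.trans ht.le⟩, hy⟩
  have hAne : A.Nonempty := ⟨t₀, ht₀A⟩
  set m := sInf A with hmdef
  have hmt₀ : m ≤ t₀ := sInf_le ht₀A
  obtain ⟨U, V, I, J, hU, hV, hIU, hJV, hmU, ht₀V, hD⟩ := hloc (m, t₀)
  -- a right interval of `t₀` inside `V`
  obtain ⟨u, hu, hIcoV⟩ :=
    exists_Ico_subset_of_mem_nhds (hV.mem_nhds ht₀V) ⟨t₂, ht⟩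
  have hs₁ex : ∃ s₁, t₀ < s₁ ∧ s₁ ≤ t₂ ∧ Set.Icc t₀ s₁ ⊆ V := by
    rcases lt_or_ge t₂ u with h | h
    · exact ⟨t₂, ht, le_refl _, fun y hy => hIcoV ⟨hy.1, lt_of_le_of_lt hy.2 h⟩⟩
    · obtain ⟨c, hc1, hc2⟩ := exists_between hu
      exact ⟨c, hc1, hc2.le.trans h, fun y hy => hIcoV ⟨hy.1, lt_of_le_of_lt hy.2 hc2⟩⟩
  obtain ⟨s₁, hs₁t₀, hs₁t₂, hs₁V⟩ := hs₁ex
  -- a right interval of `m` inside `U`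
  obtain ⟨u', hmu', hIcoU⟩ :=
    exists_Ico_subset_of_mem_nhds (hU.mem_nhds hmU) ⟨t₂, lt_of_le_of_lt hmt₀ ht⟩
  -- a member of `A` close to its infimum
  obtain ⟨a, haA, hau'⟩ := exists_lt_of_csInf_lt hAne hmu'
  obtain ⟨hat₀, sa, hsat₀, hsat₂, hsaD⟩ := haA
  have hma : m ≤ a := sInf_le ⟨hat₀, sa, hsat₀, hsat₂, hsaD⟩
  have haU : a ∈ U := hIcoU ⟨hma, hau'⟩
  set s' := min s₁ sa with hs'def
  have hs't₀ : t₀ < s' := lt_min hs₁t₀ hsat₀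
  have hs't₂ : s' ≤ t₂ := (min_le_left _ _).trans hs₁t₂
  -- all of `[t₀, s']` lies in `J`
  have hJ : ∀ y ∈ Set.Icc t₀ s', y ∈ J := by
    intro y hy
    have hyV : y ∈ V := hs₁V ⟨hy.1, hy.2.trans (min_le_left _ _)⟩
    have hyD : (a, y) ∈ D := hsaD ⟨⟨le_refl _, hat₀⟩, ⟨hy.1, hy.2.trans (min_le_right _ _)⟩⟩
    have hmem : (a, y) ∈ D ∩ U ×ˢ V := ⟨hyD, haU, hyV⟩
    rw [hD] at hmem
    exact hmem.2
  -- core claim: points of `U ∩ [0,t₀]` have their column `[t₀,s']` inside `D`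
  have hCl : ∀ x ∈ U, x ≤ t₀ → ∀ y ∈ Set.Icc t₀ s', ((x, y) : unitInterval × unitInterval) ∈ D := by
    intro x hxU hxt₀ y hy
    have hxD : (x, t₀) ∈ D :=
      h₀ ⟨⟨unitInterval.nonneg' , hxt₀⟩, ⟨unitInterval.nonneg', le_refl _⟩⟩
    have hxI : x ∈ I := by
      have hmem : (x, t₀) ∈ D ∩ U ×ˢ V := ⟨hxD, hxU, ht₀V⟩
      rw [hD] at hmem
      exact hmem.1
    have hmem : (x, y) ∈ I ×ˢ J := ⟨hxI, hJ y hy⟩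
    rw [← hD] at hmem
    exact hmem.1
  -- hence all of `[m, t₀] × [t₀, s']` lies in `D`
  have hC2 : ∀ x, m ≤ x → x ≤ t₀ → ∀ y ∈ Set.Icc t₀ s',
      ((x, y) : unitInterval × unitInterval) ∈ D := by
    intro x hmx hxt₀ y hy
    rcases le_total a x with h | h
    · exact hsaD ⟨⟨h, hxt₀⟩, ⟨hy.1, hy.2.trans (min_le_right _ _)⟩⟩
    · exact hCl x (hIcoU ⟨hmx, lt_of_le_of_lt h hau'⟩) hxt₀ y hy
  -- the infimum must be `0`
  have hm0 : m = 0 := by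
    by_contra hne
    have h0m : (0 : unitInterval) < m := lt_of_le_of_ne unitInterval.nonneg' (Ne.symm hne)
    obtain ⟨l, hlm, hIoc⟩ := exists_Ioc_subset_of_mem_nhds (hU.mem_nhds hmU) ⟨0, h0m⟩
    obtain ⟨m', hlm', hm'm⟩ := exists_between hlm
    have hm'A : m' ∈ A := by
      refine ⟨hm'm.le.trans hmt₀, s', hs't₀, hs't₂, ?_⟩
      rintro ⟨x, y⟩ ⟨hx, hy⟩
      rcases le_total m x with h | h
      · exact hC2 x h hx.2 y hy
      · exact hCl x (hIoc ⟨lt_of_lt_of_le hlm' hx.1, h⟩) hx.2 y hy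
    exact absurd (sInf_le hm'A) (not_le.2 hm'm)
  -- conclude
  refine ⟨s', hs't₀, hs't₂, ?_⟩
  rintro ⟨x, y⟩ ⟨hx, hy⟩
  exact hC2 x (hm0 ▸ unitInterval.nonneg') hx.2 y hy
end

section
/- Let D be a closed subset of [0,1] × [0,1] that is locally direct product. Let 0 ≤ t₀ < t₂ ≤ 1 be such that [0,t₀] × [0,t₀] ⊆ D and [t₀,t₂] × [t₀,t₂] ⊆ D. Then there exists t₄ ∈ (t₀, t₂] such that [t₀,t₄] × [0,t₀] ⊆ D. -/
theorem stmt_10 (D : Set (unitInterval × unitInterval)) (hcl : IsClosed D)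
    (hloc : LocallyDirectProduct D)
    (t₀ t₂ : unitInterval) (ht : t₀ < t₂)
    (h₀ : Set.Icc 0 t₀ ×ˢ Set.Icc 0 t₀ ⊆ D)
    (h₂ : Set.Icc t₀ t₂ ×ˢ Set.Icc t₀ t₂ ⊆ D) :
    ∃ t₄ : unitInterval, t₀ < t₄ ∧ t₄ ≤ t₂ ∧ Set.Icc t₀ t₄ ×ˢ Set.Icc 0 t₀ ⊆ D := by
  classical
  choose U V I J hU hV hIU hJV hpU hpV hEq using fun b : unitInterval => hloc (t₀, b)
  set K : Set unitInterval := Set.Icc 0 t₀ with hKdef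
  have hKcomp : IsCompact K := isClosed_Icc.isCompact
  obtain ⟨F, hF⟩ := hKcomp.elim_finite_subcover (fun b => V b) (fun b => hV b)
    (fun b _ => Set.mem_iUnion.mpr ⟨b, hpV b⟩)
  set U' : Set unitInterval := ⋂ b ∈ F, U b with hU'def
  have hU'open : IsOpen U' := isOpen_biInter_finset fun b _ => hU b
  have ht₀U' : t₀ ∈ U' := Set.mem_iInter₂.mpr fun b _ => hpU b
  -- preconnectedness of K
  haveI : Set.OrdConnected unitInterval := Set.ordConnected_Icc
  have hKpre : IsPreconnected K := by
    rw [hKdef, ← Topology.IsInducing.subtypeVal.isPreconnected_image,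
      Set.image_subtype_val_Icc]
    exact isPreconnected_Icc
  -- key step
  have key : ∀ s : unitInterval, s ∈ U' → s ∈ Set.Icc t₀ t₂ → ∀ b ∈ K, (s, b) ∈ D := by
    intro s hsU' hs
    set T : Set unitInterval := {b | (s, b) ∈ D} with hTdef
    have hTclosed : IsClosed T := hcl.preimage (Continuous.prodMk_right s)
    set O : Set unitInterval := ⋃ b₀ ∈ {b₀ | b₀ ∈ F ∧ s ∈ I b₀}, V b₀ with hOdef
    have hOopen : IsOpen O := isOpen_biUnion fun b₀ _ => hV b₀
    -- columns: V b₀ ∩ K ⊆ J b₀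
    have hcol : ∀ b₀ : unitInterval, ∀ v ∈ K, v ∈ V b₀ → v ∈ J b₀ := by
      intro b₀ v hvK hvV
      have hD : (t₀, v) ∈ D := h₀ ⟨Set.mem_Icc.mpr ⟨t₀.2.1 |>.trans_eq rfl |> fun _ => by
        exact unitInterval.nonneg t₀, le_refl t₀⟩, hvK⟩
      have : (t₀, v) ∈ I b₀ ×ˢ J b₀ := by
        rw [← hEq b₀]; exact ⟨hD, hpU b₀, hvV⟩
      exact this.2
    have hKO : K ∩ O ⊆ T := by
      rintro v ⟨hvK, hvO⟩
      obtain ⟨b₀, hb₀, hvV⟩ := Set.mem_iUnion₂.mp hvO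
      have hvJ : v ∈ J b₀ := hcol b₀ v hvK hvV
      have : (s, v) ∈ I b₀ ×ˢ J b₀ := ⟨hb₀.2, hvJ⟩
      rw [← hEq b₀] at this
      exact this.1
    have hKT : K ∩ T ⊆ O := by
      rintro b ⟨hbK, hbT⟩
      obtain ⟨b₀, hb₀F, hbV⟩ := Set.mem_iUnion₂.mp (hF hbK)
      have hsU : s ∈ U b₀ := Set.mem_iInter₂.mp hsU' b₀ hb₀F
      have : (s, b) ∈ I b₀ ×ˢ J b₀ := by
        rw [← hEq b₀]; exact ⟨hbT, hsU, hbV⟩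
      exact Set.mem_iUnion₂.mpr ⟨b₀, ⟨hb₀F, this.1⟩, hbV⟩
    have hcover : K ⊆ T ∪ Oᶜ := by
      intro b hbK
      by_cases hbT : b ∈ T
      · exact Or.inl hbT
      · exact Or.inr fun hbO => hbT (hKO ⟨hbK, hbO⟩)
    have hdisj : K ∩ (T ∩ Oᶜ) = ∅ := by
      ext b; simp only [Set.mem_inter_iff, Set.mem_compl_iff, Set.mem_empty_iff_false,
        iff_false]
      rintro ⟨hbK, hbT, hbO⟩
      exact hbO (hKT ⟨hbK, hbT⟩)
    have := (isPreconnected_iff_subset_of_disjoint_closed.mp hKpre) T Oᶜ hTclosed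
      hOopen.isClosed_compl hcover hdisj
    rcases this with h | h
    · exact fun b hb => h hb
    · exfalso
      have ht₀T : t₀ ∈ T := h₂ ⟨Set.mem_Icc.mpr ⟨hs.1, hs.2⟩, Set.mem_Icc.mpr ⟨le_refl t₀, ht.le⟩⟩
      have ht₀K : t₀ ∈ K := Set.mem_Icc.mpr ⟨unitInterval.nonneg t₀, le_refl t₀⟩
      exact (h ht₀K) (hKT ⟨ht₀K, ht₀T⟩)
  -- now extract t₄
  obtain ⟨u, hu, hIco⟩ := exists_Ico_subset_of_mem_nhds (hU'open.mem_nhds ht₀U') ⟨t₂, ht⟩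
  obtain ⟨t₄, ht₄⟩ : ∃ t₄, t₀ < t₄ ∧ t₄ ≤ t₂ ∧ t₄ < u := by
    rcases lt_or_ge t₂ u with h | h
    · exact ⟨t₂, ht, le_refl _, h⟩
    · obtain ⟨c, hc1, hc2⟩ := exists_between hu
      exact ⟨c, hc1, hc2.le.trans h, hc2⟩
  refine ⟨t₄, ht₄.1, ht₄.2.1, ?_⟩
  rintro ⟨s, b⟩ ⟨hs, hb⟩
  exact key s (hIco ⟨hs.1, hs.2.trans_lt ht₄.2.2⟩)
    (Set.mem_Icc.mpr ⟨hs.1, hs.2.trans ht₄.2.1⟩) b hb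
end

section
/- Let D be a closed subset of [0,1] × [0,1] that is locally direct product and contains the diagonal. Then the set T = { t ∈ [0,1] | ∀ (u,v) ∈ [0,t] × [0,t], (u,v) ∈ D } is a nonempty set that is both closed and open in [0,1], and hence T = [0,1]. -/
/-- `Icc 0 t` in the unit interval is preconnected (image of a real interval under `projIcc`). -/
lemma icc_preconnected (t : unitInterval) : IsPreconnected (Set.Icc (0:unitInterval) t) := by
  have h1 : IsPreconnected (Set.Icc (0:ℝ) (t:ℝ)) := isPreconnected_Icc
  have h2 := h1.image (Set.projIcc (0:ℝ) 1 zero_le_one)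
    (continuous_projIcc.continuousOn)
  have heq : Set.projIcc (0:ℝ) 1 zero_le_one '' Set.Icc (0:ℝ) (t:ℝ)
      = Set.Icc (0:unitInterval) t := by
    ext y
    constructor
    · rintro ⟨x, ⟨hx0, hxt⟩, rfl⟩
      have hx1 : x ∈ Set.Icc (0:ℝ) 1 := ⟨hx0, hxt.trans t.2.2⟩
      rw [Set.projIcc_of_mem _ hx1]
      exact ⟨Subtype.coe_le_coe.mp (by simpa using hx0), Subtype.coe_le_coe.mp (by simpa using hxt)⟩
    · rintro ⟨hy0, hyt⟩
      refine ⟨(y : ℝ), ⟨y.2.1, Subtype.coe_le_coe.mpr hyt⟩, ?_⟩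
      rw [Set.projIcc_of_mem _ y.2]
  rwa [heq] at h2

/-- Propagation along `[0,t]` by connectedness: a closed predicate holding at `t`,
relatively open within `[0,t]`, holds on all of `[0,t]`. -/
lemma prop_aux {t : unitInterval} {P : unitInterval → Prop} (hP : IsClosed {v | P v})
    (hPt : P t)
    (hop : ∀ v ∈ Set.Icc 0 t, P v →
      ∃ W, IsOpen W ∧ v ∈ W ∧ ∀ w ∈ W ∩ Set.Icc 0 t, P w) :
    ∀ v ∈ Set.Icc 0 t, P v := by
  classical
  by_contra hcon
  push_neg at hcon
  obtain ⟨v₀, hv₀, hnp⟩ := hcon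
  have hop' : ∀ v : unitInterval, ∃ W, IsOpen W ∧
      (v ∈ Set.Icc 0 t → P v → (v ∈ W ∧ ∀ w ∈ W ∩ Set.Icc 0 t, P w)) := by
    intro v
    by_cases h : v ∈ Set.Icc 0 t ∧ P v
    · obtain ⟨W, h1, h2, h3⟩ := hop v h.1 h.2
      exact ⟨W, h1, fun _ _ => ⟨h2, h3⟩⟩
    · exact ⟨∅, isOpen_empty, fun h1 h2 => absurd ⟨h1, h2⟩ h⟩
  choose W hWo hWp using hop'
  set O : Set unitInterval := ⋃ v ∈ {v | v ∈ Set.Icc 0 t ∧ P v}, W v with hO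
  have hOo : IsOpen O := isOpen_biUnion fun v _ => hWo v
  have htt : t ∈ Set.Icc (0:unitInterval) t := ⟨unitInterval.nonneg' , le_refl t⟩
  have hsub : Set.Icc 0 t ⊆ O ∪ {v | P v}ᶜ := by
    intro v hv
    by_cases h : P v
    · exact Or.inl (Set.mem_biUnion ⟨hv, h⟩ ((hWp v hv h).1))
    · exact Or.inr h
  have hne1 : (Set.Icc 0 t ∩ O).Nonempty :=
    ⟨t, htt, Set.mem_biUnion ⟨htt, hPt⟩ ((hWp t htt hPt).1)⟩
  have hne2 : (Set.Icc 0 t ∩ {v | P v}ᶜ).Nonempty := ⟨v₀, hv₀, hnp⟩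
  obtain ⟨x, hxI, hxO, hxnp⟩ :=
    (icc_preconnected t) O ({v | P v}ᶜ) hOo hP.isOpen_compl hsub hne1 hne2
  obtain ⟨v, hv, hxW⟩ := Set.mem_iUnion₂.mp hxO
  exact hxnp ((hWp v hv.1 hv.2).2 x ⟨hxW, hxI⟩)




theorem stmt_11 (D : Set (unitInterval × unitInterval)) (hcl : IsClosed D)
    (hloc : LocallyDirectProduct D) (hdiag : ∀ t : unitInterval, (t, t) ∈ D) :
    ({t : unitInterval | ∀ u ∈ Set.Icc 0 t, ∀ v ∈ Set.Icc 0 t, (u, v) ∈ D}).Nonempty ∧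
      IsClosed {t : unitInterval | ∀ u ∈ Set.Icc 0 t, ∀ v ∈ Set.Icc 0 t, (u, v) ∈ D} ∧
      IsOpen {t : unitInterval | ∀ u ∈ Set.Icc 0 t, ∀ v ∈ Set.Icc 0 t, (u, v) ∈ D} ∧
      {t : unitInterval | ∀ u ∈ Set.Icc 0 t, ∀ v ∈ Set.Icc 0 t, (u, v) ∈ D} = Set.univ := by
  classical
  have h0 : (0:unitInterval) ∈ {t : unitInterval | ∀ u ∈ Set.Icc 0 t, ∀ v ∈ Set.Icc 0 t,
      (u, v) ∈ D} := by
    intro u hu v hv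
    have hu0 : u = 0 := le_antisymm hu.2 hu.1
    have hv0 : v = 0 := le_antisymm hv.2 hv.1
    rw [hu0, hv0]; exact hdiag 0
  have hclosed : IsClosed {t : unitInterval | ∀ u ∈ Set.Icc 0 t, ∀ v ∈ Set.Icc 0 t,
      (u, v) ∈ D} := by
    have hEq : {t : unitInterval | ∀ u ∈ Set.Icc 0 t, ∀ v ∈ Set.Icc 0 t, (u, v) ∈ D}
        = ⋂ (u : unitInterval), ⋂ (v : unitInterval),
            (fun t => (min u t, min v t)) ⁻¹' D := by
      ext t
      simp only [Set.mem_iInter, Set.mem_setOf_eq, Set.mem_preimage]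
      constructor
      · intro h u v
        exact h (min u t) ⟨unitInterval.nonneg', min_le_right _ _⟩
          (min v t) ⟨unitInterval.nonneg', min_le_right _ _⟩
      · intro h u hu v hv
        have := h u v
        rwa [min_eq_left hu.2, min_eq_left hv.2] at this
    rw [hEq]
    refine isClosed_iInter fun u => isClosed_iInter fun v => IsClosed.preimage ?_ hcl
    exact Continuous.prodMk (Continuous.min continuous_const continuous_id)
      (Continuous.min continuous_const continuous_id)
  have hopen : IsOpen {t : unitInterval | ∀ u ∈ Set.Icc 0 t, ∀ v ∈ Set.Icc 0 t,
      (u, v) ∈ D} := by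
    rw [isOpen_iff_mem_nhds]
    intro t ht
    simp only [Set.mem_setOf_eq] at ht
    obtain ⟨U₀, V₀, I₀, J₀, hU₀, hV₀, _, _, htU₀, htV₀, heq₀⟩ := hloc (t, t)
    have hmemI₀ : ∀ s, s ∈ U₀ → s ∈ V₀ → s ∈ I₀ := fun s h1 h2 =>
      (((Set.ext_iff.mp heq₀ (s, s)).mp ⟨hdiag s, h1, h2⟩).1)
    have hmemJ₀ : ∀ s, s ∈ U₀ → s ∈ V₀ → s ∈ J₀ := fun s h1 h2 =>
      (((Set.ext_iff.mp heq₀ (s, s)).mp ⟨hdiag s, h1, h2⟩).2)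
    have htI₀ : t ∈ I₀ := hmemI₀ t htU₀ htV₀
    have htJ₀ : t ∈ J₀ := hmemJ₀ t htU₀ htV₀
    have memD₀ : ∀ a b, a ∈ I₀ → b ∈ J₀ → (a, b) ∈ D := fun a b ha hb =>
      ((Set.ext_iff.mp heq₀ (a, b)).mpr ⟨ha, hb⟩).1
    choose U V Is Js hUo hVo hIU hJV hmU hmV heq using hloc
    -- rows: cover [0,t] by V (t, v)
    have hcompact : IsCompact (Set.Icc (0:unitInterval) t) := isClosed_Icc.isCompact
    have hcovR : Set.Icc (0:unitInterval) t ⊆ ⋃ v ∈ Set.Icc (0:unitInterval) t, V (t, v) :=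
      fun v hv => Set.mem_biUnion hv (hmV (t, v))
    obtain ⟨FR, hFRsub, hFRfin, hFRcov⟩ :=
      hcompact.elim_finite_subcover_image (fun v _ => hVo (t, v)) hcovR
    set A := ⋂ v ∈ FR, U (t, v) with hA
    have hAo : IsOpen A := hFRfin.isOpen_biInter fun v _ => hUo (t, v)
    have htA : t ∈ A := Set.mem_iInter₂.mpr fun v _ => hmU (t, v)
    -- columns: cover [0,t] by U (u, t)
    have hcovC : Set.Icc (0:unitInterval) t ⊆ ⋃ u ∈ Set.Icc (0:unitInterval) t, U (u, t) :=
      fun u hu => Set.mem_biUnion hu (hmU (u, t))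
    obtain ⟨FC, hFCsub, hFCfin, hFCcov⟩ :=
      hcompact.elim_finite_subcover_image (fun u _ => hUo (u, t)) hcovC
    set E := ⋂ u ∈ FC, V (u, t) with hE
    have hEo : IsOpen E := hFCfin.isOpen_biInter fun u _ => hVo (u, t)
    have htE : t ∈ E := Set.mem_iInter₂.mpr fun u _ => hmV (u, t)
    set N := U₀ ∩ V₀ ∩ A ∩ E with hN
    have hNo : IsOpen N := ((hU₀.inter hV₀).inter hAo).inter hEo
    have htN : t ∈ N := ⟨⟨⟨htU₀, htV₀⟩, htA⟩, htE⟩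
    obtain ⟨δ, hδ, hball⟩ := Metric.isOpen_iff.mp hNo t htN
    have htt : t ∈ Set.Icc (0:unitInterval) t := ⟨unitInterval.nonneg', le_refl t⟩
    -- row claim
    have rowClaim : ∀ s ∈ N, ∀ v ∈ Set.Icc (0:unitInterval) t, (s, v) ∈ D := by
      intro s hs
      have hsI₀ : s ∈ I₀ := hmemI₀ s hs.1.1.1 hs.1.1.2
      refine prop_aux (P := fun v => (s, v) ∈ D) ?_ (memD₀ s t hsI₀ htJ₀) ?_
      · exact hcl.preimage (Continuous.prodMk_right s)
      · intro v hv hPv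
        obtain ⟨w, hwFR, hvW⟩ := Set.mem_iUnion₂.mp (hFRcov hv)
        refine ⟨V (t, w), hVo (t, w), hvW, ?_⟩
        have hsU : s ∈ U (t, w) := Set.mem_iInter₂.mp hs.1.2 w hwFR
        have hsIw : s ∈ Is (t, w) :=
          ((Set.ext_iff.mp (heq (t, w)) (s, v)).mp ⟨hPv, hsU, hvW⟩).1
        intro w' hw'
        have hw'J : w' ∈ Js (t, w) :=
          ((Set.ext_iff.mp (heq (t, w)) (t, w')).mp
            ⟨ht t htt w' hw'.2, hmU (t, w), hw'.1⟩).2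
        exact ((Set.ext_iff.mp (heq (t, w)) (s, w')).mpr ⟨hsIw, hw'J⟩).1
    -- column claim
    have colClaim : ∀ s ∈ N, ∀ u ∈ Set.Icc (0:unitInterval) t, (u, s) ∈ D := by
      intro s hs
      have hsJ₀ : s ∈ J₀ := hmemJ₀ s hs.1.1.1 hs.1.1.2
      refine prop_aux (P := fun u => (u, s) ∈ D) ?_ (memD₀ t s htI₀ hsJ₀) ?_
      · exact hcl.preimage (continuous_id.prodMk continuous_const)
      · intro u hu hPu
        obtain ⟨w, hwFC, huW⟩ := Set.mem_iUnion₂.mp (hFCcov hu)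
        refine ⟨U (w, t), hUo (w, t), huW, ?_⟩
        have hsV : s ∈ V (w, t) := Set.mem_iInter₂.mp hs.2 w hwFC
        have hsJw : s ∈ Js (w, t) :=
          ((Set.ext_iff.mp (heq (w, t)) (u, s)).mp ⟨hPu, huW, hsV⟩).2
        intro u' hu'
        have hu'I : u' ∈ Is (w, t) :=
          ((Set.ext_iff.mp (heq (w, t)) (u', t)).mp
            ⟨ht u' hu'.2 t htt, hu'.1, hmV (w, t)⟩).1
        exact ((Set.ext_iff.mp (heq (w, t)) (u', s)).mpr ⟨hu'I, hsJw⟩).1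
    refine Filter.mem_of_superset (Metric.ball_mem_nhds t hδ) ?_
    intro t'' ht''
    simp only [Set.mem_setOf_eq]
    by_cases hle : t'' ≤ t
    · exact fun u hu v hv => ht u ⟨hu.1, hu.2.trans hle⟩ v ⟨hv.1, hv.2.trans hle⟩
    push_neg at hle
    have hdist : (t'':ℝ) - (t:ℝ) < δ := by
      have := Metric.mem_ball.mp ht''
      rw [Subtype.dist_eq, Real.dist_eq] at this
      calc (t'':ℝ) - (t:ℝ) ≤ |(t'':ℝ) - (t:ℝ)| := le_abs_self _
        _ < δ := this
    have hmemN : ∀ x : unitInterval, t < x → x ≤ t'' → x ∈ N := by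
      intro x h1 h2
      apply hball
      rw [Metric.mem_ball, Subtype.dist_eq, Real.dist_eq]
      have h3 : |(x:ℝ) - (t:ℝ)| = (x:ℝ) - (t:ℝ) :=
        abs_of_nonneg (sub_nonneg.mpr (Subtype.coe_le_coe.mpr h1.le))
      rw [h3]
      have h4 : (x:ℝ) ≤ (t'':ℝ) := Subtype.coe_le_coe.mpr h2
      linarith
    intro u hu v hv
    by_cases hut : u ≤ t <;> by_cases hvt : v ≤ t
    · exact ht u ⟨hu.1, hut⟩ v ⟨hv.1, hvt⟩
    · push_neg at hvt
      exact colClaim v (hmemN v hvt hv.2) u ⟨hu.1, hut⟩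
    · push_neg at hut
      exact rowClaim u (hmemN u hut hu.2) v ⟨hv.1, hvt⟩
    · push_neg at hut hvt
      have hu' := hmemN u hut hu.2
      have hv' := hmemN v hvt hv.2
      exact memD₀ u v (hmemI₀ u hu'.1.1.1 hu'.1.1.2) (hmemJ₀ v hv'.1.1.1 hv'.1.1.2)
  exact ⟨⟨0, h0⟩, hclosed, hopen, IsClopen.eq_univ ⟨hclosed, hopen⟩ ⟨0, h0⟩⟩
end

section
/- Let X and Y be topological spaces and let C be a path-connected closed subset of X × Y that is locally direct product. Then both projections A = { x ∈ X | ∃ y ∈ Y, (x,y) ∈ C } and B = { y ∈ Y | ∃ x ∈ X, (x,y) ∈ C } are path-connected, and C is homeomorphic to the product space A × B. -/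
/-- A local rectangle gives a local "mixing" characterization of membership in `C`. -/
lemma LocallyDirectProduct.rect_iff {X Y : Type*} [TopologicalSpace X] [TopologicalSpace Y]
    {C : Set (X × Y)} (hloc : LocallyDirectProduct C) {P : X × Y} (hP : P ∈ C) :
    ∃ U V, IsOpen U ∧ IsOpen V ∧ P.1 ∈ U ∧ P.2 ∈ V ∧
      ∀ x ∈ U, ∀ y ∈ V, ((x, y) ∈ C ↔ (x, P.2) ∈ C ∧ (P.1, y) ∈ C) := by
  obtain ⟨U, V, I, J, hU, hV, _, _, hPU, hPV, hCUV⟩ := hloc P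
  have hmem : ∀ a b, a ∈ U → b ∈ V → ((a, b) ∈ C ↔ a ∈ I ∧ b ∈ J) := by
    intro a b ha hb
    constructor
    · intro h
      have h2 : (a, b) ∈ C ∩ U ×ˢ V := ⟨h, ha, hb⟩
      rw [hCUV] at h2
      exact h2
    · intro h
      have h2 : (a, b) ∈ I ×ˢ J := h
      rw [← hCUV] at h2
      exact h2.1
  have hPIJ : P.1 ∈ I ∧ P.2 ∈ J := (hmem P.1 P.2 hPU hPV).1 hP
  refine ⟨U, V, hU, hV, hPU, hPV, fun x hx y hy => ?_⟩
  rw [hmem x y hx hy, hmem x P.2 hx hPV, hmem P.1 y hPU hy]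
  tauto

/-- Main mixing lemma: in a path-connected, closed, locally-direct-product set,
coordinates of any two points can be mixed. -/
lemma mix_mem {X Y : Type*} [TopologicalSpace X] [TopologicalSpace Y]
    {C : Set (X × Y)} (hpc : IsPathConnected C) (hcl : IsClosed C)
    (hloc : LocallyDirectProduct C) :
    ∀ p ∈ C, ∀ q ∈ C, (p.1, q.2) ∈ C := by
  intro p hp q hq
  obtain ⟨γ, hγ⟩ := hpc.joinedIn p hp q hq
  set f : ℝ → X := fun s => (γ.extend s).1 with hf
  set g : ℝ → Y := fun t => (γ.extend t).2 with hg
  have hfc : Continuous f := γ.continuous_extend.fst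
  have hgc : Continuous g := γ.continuous_extend.snd
  have hmemC : ∀ s : ℝ, (f s, g s) ∈ C := fun s => hγ _
  set H : Set (ℝ × ℝ) := {st | (f st.1, g st.2) ∈ C} with hH
  have hHcl : IsClosed H := hcl.preimage ((hfc.comp continuous_fst).prodMk (hgc.comp continuous_snd))
  -- rectangle property of H at its points
  have hrect : ∀ a b : ℝ, (a, b) ∈ H → ∃ N N' : Set ℝ, IsOpen N ∧ IsOpen N' ∧ a ∈ N ∧ b ∈ N' ∧
      ∀ s ∈ N, ∀ t ∈ N', ((s, t) ∈ H ↔ (s, b) ∈ H ∧ (a, t) ∈ H) := by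
    intro a b hab
    obtain ⟨U, V, hU, hV, haU, hbV, hiff⟩ := hloc.rect_iff hab
    exact ⟨f ⁻¹' U, g ⁻¹' V, hU.preimage hfc, hV.preimage hgc, haU, hbV,
      fun s hs t ht => hiff (f s) hs (g t) ht⟩
  -- local squares around the diagonal
  have hsq : ∀ u : ℝ, ∃ O : Set ℝ, IsOpen O ∧ u ∈ O ∧ ∀ s ∈ O, ∀ t ∈ O, (s, t) ∈ H := by
    intro u
    obtain ⟨N, N', hN, hN', hu, hu', hiff⟩ := hrect u u (hmemC u)
    refine ⟨N ∩ N', hN.inter hN', ⟨hu, hu'⟩, fun s hs t ht => ?_⟩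
    have h1 : (s, u) ∈ H ∧ (u, s) ∈ H := (hiff s hs.1 s hs.2).1 (hmemC s)
    have h2 : (t, u) ∈ H ∧ (u, t) ∈ H := (hiff t ht.1 t ht.2).1 (hmemC t)
    exact (hiff s hs.1 t ht.2).2 ⟨h1.1, h2.2⟩
  -- the set of "good levels"
  set S : Set ℝ := {r | r ∈ Set.Icc (0:ℝ) 1 ∧
      ∀ s ∈ Set.Icc (0:ℝ) 1, ∀ t ∈ Set.Icc (0:ℝ) 1, (min s r, min t r) ∈ H} with hS
  have h0S : (0:ℝ) ∈ S := by
    refine ⟨⟨le_refl 0, zero_le_one⟩, fun s hs t ht => ?_⟩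
    rw [min_eq_right hs.1, min_eq_right ht.1]
    exact hmemC 0
  have hScl : IsClosed S := by
    have : S = Set.Icc (0:ℝ) 1 ∩ ⋂ s ∈ Set.Icc (0:ℝ) 1, ⋂ t ∈ Set.Icc (0:ℝ) 1,
        (fun r => ((min s r : ℝ), (min t r : ℝ))) ⁻¹' H := by
      ext r
      simp only [hS, Set.mem_setOf_eq, Set.mem_inter_iff, Set.mem_iInter, Set.mem_preimage]
    rw [this]
    refine isClosed_Icc.inter (isClosed_biInter fun s _ => isClosed_biInter fun t _ =>
      hHcl.preimage (((continuous_const.min continuous_id).prodMk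
        (continuous_const.min continuous_id))))
  have hbdd : BddAbove S := ⟨1, fun r hr => hr.1.2⟩
  set R : ℝ := sSup S with hR
  have hRS : R ∈ S := hScl.csSup_mem ⟨0, h0S⟩ hbdd
  -- the key openness step
  have hkey : ∀ r ∈ S, r < 1 → ∃ m ∈ S, r < m := by
    intro r hrS hr1
    have hr0 : (0:ℝ) ≤ r := hrS.1.1
    have hQ : ∀ s, 0 ≤ s → s ≤ r → ∀ t, 0 ≤ t → t ≤ r → (s, t) ∈ H := by
      intro s hs0 hsr t ht0 htr
      have := hrS.2 s ⟨hs0, hsr.trans hr1.le⟩ t ⟨ht0, htr.trans hr1.le⟩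
      rwa [min_eq_left hsr, min_eq_left htr] at this
    -- choose rectangles along the row {r} × [0,r] and the column [0,r] × {r}
    have hrectR : ∀ t : ℝ, ∃ NN : Set ℝ × Set ℝ, IsOpen NN.1 ∧ IsOpen NN.2 ∧ r ∈ NN.1 ∧ t ∈ NN.2 ∧
        ((r, t) ∈ H → ∀ s ∈ NN.1, ∀ t' ∈ NN.2, ((s, t') ∈ H ↔ (s, t) ∈ H ∧ (r, t') ∈ H)) := by
      intro t
      by_cases h : (r, t) ∈ H
      · obtain ⟨N, N', hN, hN', h1, h2, h3⟩ := hrect r t h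
        exact ⟨(N, N'), hN, hN', h1, h2, fun _ => h3⟩
      · exact ⟨(Set.univ, Set.univ), isOpen_univ, isOpen_univ, trivial, trivial,
          fun h' => absurd h' h⟩
    choose NN hNo hN'o hNr hN't hNiff using hrectR
    have hrectC : ∀ t : ℝ, ∃ MM : Set ℝ × Set ℝ, IsOpen MM.1 ∧ IsOpen MM.2 ∧ t ∈ MM.1 ∧ r ∈ MM.2 ∧
        ((t, r) ∈ H → ∀ s ∈ MM.1, ∀ t' ∈ MM.2, ((s, t') ∈ H ↔ (s, r) ∈ H ∧ (t, t') ∈ H)) := by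
      intro t
      by_cases h : (t, r) ∈ H
      · obtain ⟨N, N', hN, hN', h1, h2, h3⟩ := hrect t r h
        exact ⟨(N, N'), hN, hN', h1, h2, fun _ => h3⟩
      · exact ⟨(Set.univ, Set.univ), isOpen_univ, isOpen_univ, trivial, trivial,
          fun h' => absurd h' h⟩
    choose MM hMo hM'o hMt hM'r hMiff using hrectC
    obtain ⟨O, hOo, hOr, hOsq⟩ := hsq r
    -- finite subcover of [0, r]
    obtain ⟨F, hFmem, hFcov⟩ := isCompact_Icc.elim_nhds_subcover
      (fun t => (NN t).2 ∩ (MM t).1)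
      (fun t _ => (((hN'o t).inter (hMo t)).mem_nhds ⟨hN't t, hMt t⟩))
    set Nfin : Set ℝ := O ∩ ⋂ t ∈ F, ((NN t).1 ∩ (MM t).2) with hNfin
    have hNfino : IsOpen Nfin :=
      hOo.inter (isOpen_biInter_finset fun t _ => (hNo t).inter (hM'o t))
    have hNfinr : r ∈ Nfin := ⟨hOr, Set.mem_biInter fun t _ => ⟨hNr t, hM'r t⟩⟩
    obtain ⟨ε, hε, hball⟩ := Metric.isOpen_iff.1 hNfino r hNfinr
    set m : ℝ := min 1 (r + ε / 2) with hm
    have hrm : r < m := lt_min hr1 (by linarith)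
    have hm1 : m ≤ 1 := min_le_left _ _
    have hm0 : (0:ℝ) ≤ m := hr0.trans hrm.le
    -- every point of (r, m] (and r itself) lies in Nfin
    have hmemNfin : ∀ u, r ≤ u → u ≤ m → u ∈ Nfin := by
      intro u hu1 hu2
      apply hball
      rw [Metric.mem_ball, Real.dist_eq, abs_of_nonneg (by linarith)]
      have : u ≤ r + ε / 2 := hu2.trans (min_le_right _ _)
      linarith
    -- main claim: [0,m]² ⊆ H
    have hkey2 : ∀ s, 0 ≤ s → s ≤ m → ∀ t, 0 ≤ t → t ≤ m → (s, t) ∈ H := by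
      intro s hs0 hsm t ht0 htm
      rcases le_or_gt s r with hsr | hsr
      · rcases le_or_gt t r with htr | htr
        · exact hQ s hs0 hsr t ht0 htr
        · -- column case: s ≤ r < t
          have htN : t ∈ Nfin := hmemNfin t htr.le htm
          set T : Set ℝ := {u | u ∈ Set.Icc (0:ℝ) r ∧ ∀ v ∈ Set.Icc (0:ℝ) r, (max v u, t) ∈ H}
            with hT
          have hTcl : IsClosed T := by
            have : T = Set.Icc (0:ℝ) r ∩ ⋂ v ∈ Set.Icc (0:ℝ) r,
                (fun u => ((max v u : ℝ), t)) ⁻¹' H := by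
              ext u
              simp only [hT, Set.mem_setOf_eq, Set.mem_inter_iff, Set.mem_iInter,
                Set.mem_preimage]
            rw [this]
            exact isClosed_Icc.inter (isClosed_biInter fun v _ =>
              hHcl.preimage ((continuous_const.max continuous_id).prodMk continuous_const))
          have hrT : r ∈ T := by
            refine ⟨⟨hr0, le_refl r⟩, fun v hv => ?_⟩
            rw [max_eq_right hv.2]
            exact hOsq r hOr t htN.1
          have hTbdd : BddBelow T := ⟨0, fun u hu => hu.1.1⟩
          set i : ℝ := sInf T with hi
          have hiT : i ∈ T := hTcl.csInf_mem ⟨r, hrT⟩ hTbdd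
          have hi0 : i = 0 := by
            by_contra hne
            have hipos : 0 < i := lt_of_le_of_ne hiT.1.1 (Ne.symm hne)
            obtain ⟨t₀, ht₀F, ht₀⟩ := Set.mem_iUnion₂.1 (hFcov hiT.1)
            have ht₀r : t₀ ∈ Set.Icc (0:ℝ) r := hFmem t₀ ht₀F
            have ht₀rH : (t₀, r) ∈ H := hQ t₀ ht₀r.1 ht₀r.2 r hr0 (le_refl r)
            have hMiff' := hMiff t₀ ht₀rH
            have hitH : (i, t) ∈ H := by
              have := hiT.2 i hiT.1
              rwa [max_self] at this
            have htM' : t ∈ (MM t₀).2 := (Set.mem_iInter₂.1 htN.2 t₀ ht₀F).2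
            have hsplit := (hMiff' i ht₀.2 t htM').1 hitH
            -- hsplit : (i, r) ∈ H ∧ (t₀, t) ∈ H
            obtain ⟨δ, hδ, hδball⟩ := Metric.isOpen_iff.1 (hMo t₀) i ht₀.2
            set u' : ℝ := max 0 (i - δ / 2) with hu'
            have hu'lt : u' < i := by
              rcases max_cases (0:ℝ) (i - δ / 2) with ⟨h1, h2⟩ | ⟨h1, h2⟩ <;> rw [hu', h1] <;>
                linarith
            have hu'0 : (0:ℝ) ≤ u' := le_max_left _ _
            have hu'r : u' ≤ r := hu'lt.le.trans hiT.1.2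
            have hu'T : u' ∈ T := by
              refine ⟨⟨hu'0, hu'r⟩, fun v hv => ?_⟩
              set w : ℝ := max v u' with hw
              rcases le_or_gt i w with hiw | hwi
              · have := hiT.2 w ⟨hu'0.trans (le_max_right _ _), max_le hv.2 hu'r⟩
                rwa [max_eq_left hiw] at this
              · have hwball : w ∈ (MM t₀).1 := by
                  apply hδball
                  have h3 : i - δ / 2 ≤ u' := by rw [hu']; exact le_max_right _ _
                  have h4 : u' ≤ w := by rw [hw]; exact le_max_right _ _
                  rw [Metric.mem_ball, Real.dist_eq, abs_of_nonpos (by linarith), neg_sub]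
                  linarith
                have hwr : (w, r) ∈ H :=
                  hQ w (hu'0.trans (le_max_right _ _)) (max_le hv.2 hu'r) r hr0 (le_refl r)
                exact (hMiff' w hwball t htM').2 ⟨hwr, hsplit.2⟩
            exact absurd (csInf_le hTbdd hu'T) (not_le.2 hu'lt)
          have := hiT.2 s ⟨hs0, hsr⟩
          rwa [hi0, max_eq_left hs0] at this
      · rcases le_or_gt t r with htr | htr
        · -- row case: t ≤ r < s
          have hsN : s ∈ Nfin := hmemNfin s hsr.le hsm
          set T : Set ℝ := {u | u ∈ Set.Icc (0:ℝ) r ∧ ∀ v ∈ Set.Icc (0:ℝ) r, (s, max v u) ∈ H}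
            with hT
          have hTcl : IsClosed T := by
            have : T = Set.Icc (0:ℝ) r ∩ ⋂ v ∈ Set.Icc (0:ℝ) r,
                (fun u => ((s : ℝ), (max v u : ℝ))) ⁻¹' H := by
              ext u
              simp only [hT, Set.mem_setOf_eq, Set.mem_inter_iff, Set.mem_iInter,
                Set.mem_preimage]
            rw [this]
            exact isClosed_Icc.inter (isClosed_biInter fun v _ =>
              hHcl.preimage (continuous_const.prodMk (continuous_const.max continuous_id)))
          have hrT : r ∈ T := by
            refine ⟨⟨hr0, le_refl r⟩, fun v hv => ?_⟩
            rw [max_eq_right hv.2]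
            exact hOsq s hsN.1 r hOr
          have hTbdd : BddBelow T := ⟨0, fun u hu => hu.1.1⟩
          set i : ℝ := sInf T with hi
          have hiT : i ∈ T := hTcl.csInf_mem ⟨r, hrT⟩ hTbdd
          have hi0 : i = 0 := by
            by_contra hne
            have hipos : 0 < i := lt_of_le_of_ne hiT.1.1 (Ne.symm hne)
            obtain ⟨t₀, ht₀F, ht₀⟩ := Set.mem_iUnion₂.1 (hFcov hiT.1)
            have ht₀r : t₀ ∈ Set.Icc (0:ℝ) r := hFmem t₀ ht₀F
            have hrt₀H : (r, t₀) ∈ H := hQ r hr0 (le_refl r) t₀ ht₀r.1 ht₀r.2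
            have hNiff' := hNiff t₀ hrt₀H
            have hsiH : (s, i) ∈ H := by
              have := hiT.2 i hiT.1
              rwa [max_self] at this
            have hsNt₀ : s ∈ (NN t₀).1 := (Set.mem_iInter₂.1 hsN.2 t₀ ht₀F).1
            have hsplit := (hNiff' s hsNt₀ i ht₀.1).1 hsiH
            -- hsplit : (s, t₀) ∈ H ∧ (r, i) ∈ H
            obtain ⟨δ, hδ, hδball⟩ := Metric.isOpen_iff.1 (hN'o t₀) i ht₀.1
            set u' : ℝ := max 0 (i - δ / 2) with hu'
            have hu'lt : u' < i := by
              rcases max_cases (0:ℝ) (i - δ / 2) with ⟨h1, h2⟩ | ⟨h1, h2⟩ <;> rw [hu', h1] <;>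
                linarith
            have hu'0 : (0:ℝ) ≤ u' := le_max_left _ _
            have hu'r : u' ≤ r := hu'lt.le.trans hiT.1.2
            have hu'T : u' ∈ T := by
              refine ⟨⟨hu'0, hu'r⟩, fun v hv => ?_⟩
              set w : ℝ := max v u' with hw
              rcases le_or_gt i w with hiw | hwi
              · have := hiT.2 w ⟨hu'0.trans (le_max_right _ _), max_le hv.2 hu'r⟩
                rwa [max_eq_left hiw] at this
              · have hwball : w ∈ (NN t₀).2 := by
                  apply hδball
                  have h3 : i - δ / 2 ≤ u' := by rw [hu']; exact le_max_right _ _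
                  have h4 : u' ≤ w := by rw [hw]; exact le_max_right _ _
                  rw [Metric.mem_ball, Real.dist_eq, abs_of_nonpos (by linarith), neg_sub]
                  linarith
                have hrw : (r, w) ∈ H :=
                  hQ r hr0 (le_refl r) w (hu'0.trans (le_max_right _ _)) (max_le hv.2 hu'r)
                exact (hNiff' s hsNt₀ w hwball).2 ⟨hsplit.1, hrw⟩
            exact absurd (csInf_le hTbdd hu'T) (not_le.2 hu'lt)
          have := hiT.2 t ⟨ht0, htr⟩
          rwa [hi0, max_eq_left ht0] at this
        · -- corner case: r < s, r < t: both in O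
          exact hOsq s (hmemNfin s hsr.le hsm).1 t (hmemNfin t htr.le htm).1
    refine ⟨m, ⟨⟨hm0, hm1⟩, fun s hs t ht => ?_⟩, hrm⟩
    exact hkey2 _ (le_min hs.1 hm0) (min_le_right _ _) _ (le_min ht.1 hm0) (min_le_right _ _)
  -- conclude R = 1
  have hR1 : R = 1 := by
    by_contra hne
    have : R < 1 := lt_of_le_of_ne hRS.1.2 hne
    obtain ⟨m, hmS, hm⟩ := hkey R hRS this
    exact absurd (le_csSup hbdd hmS) (not_le.2 hm)
  have h01 : ((0:ℝ), (1:ℝ)) ∈ H := by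
    have := hRS.2 0 ⟨le_refl 0, zero_le_one⟩ 1 ⟨zero_le_one, le_refl 1⟩
    rwa [hR1, min_eq_left zero_le_one, min_self] at this
  have hf0 : f 0 = p.1 := by rw [hf]; simp [γ.extend_zero]
  have hg1 : g 1 = q.2 := by rw [hg]; simp [γ.extend_one]
  rwa [hH, Set.mem_setOf_eq, hf0, hg1] at h01

theorem stmt_12 {X Y : Type*} [TopologicalSpace X] [TopologicalSpace Y]
    (C : Set (X × Y)) (hpc : IsPathConnected C) (hcl : IsClosed C)
    (hloc : LocallyDirectProduct C) :
    IsPathConnected {x : X | ∃ y : Y, (x, y) ∈ C} ∧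
      IsPathConnected {y : Y | ∃ x : X, (x, y) ∈ C} ∧
      Nonempty (C ≃ₜ ({x : X | ∃ y : Y, (x, y) ∈ C} × {y : Y | ∃ x : X, (x, y) ∈ C})) := by
  have hA : {x : X | ∃ y : Y, (x, y) ∈ C} = Prod.fst '' C := by
    ext x
    constructor
    · rintro ⟨y, hy⟩; exact ⟨(x, y), hy, rfl⟩
    · rintro ⟨⟨a, b⟩, hab, rfl⟩; exact ⟨b, hab⟩
  have hB : {y : Y | ∃ x : X, (x, y) ∈ C} = Prod.snd '' C := by
    ext y
    constructor
    · rintro ⟨x, hx⟩; exact ⟨(x, y), hx, rfl⟩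
    · rintro ⟨⟨a, b⟩, hab, rfl⟩; exact ⟨a, hab⟩
  have hCeq : C = {x : X | ∃ y : Y, (x, y) ∈ C} ×ˢ {y : Y | ∃ x : X, (x, y) ∈ C} := by
    ext ⟨x, y⟩
    constructor
    · intro h; exact ⟨⟨y, h⟩, ⟨x, h⟩⟩
    · rintro ⟨⟨y₀, hy₀⟩, ⟨x₀, hx₀⟩⟩
      exact mix_mem hpc hcl hloc (x, y₀) hy₀ (x₀, y) hx₀
  refine ⟨hA ▸ hpc.image continuous_fst, hB ▸ hpc.image continuous_snd,
    ⟨(Homeomorph.setCongr hCeq).trans (Homeomorph.Set.prod _ _)⟩⟩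
end
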